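/- arXiv:2604.19619 — 8 statements merged into one kernel-verified Lean document; each statement's English description precedes it below -/
import Mathlib

section
/- Let σ > 0, 0 < ρ ≤ 1, and suppose ε > 0 satisfies ε + ε^{1/σ} C_σ < 1 and (ε / (1 − ε)^σ) · C_{1/σ}^2 < 1. Then there exists a constant C ≥ 1 (depending only on σ, ρ, ε) such that: whenever x, y, ξ, η ∈ ℝ^d satisfy ‖x − y‖ < ε θ_σ(y, η)^ρ and ‖ξ − η‖ < ε θ_σ(y, η)^{ρσ}, one has θ_σ(y, η) ≤ C θ_σ(x, ξ). -/
open scoped Real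

variable {d : ℕ}

/-- The anisotropic weight `θ_σ(x,ξ) = 1 + ‖x‖ + ‖ξ‖^{1/σ}`. -/
noncomputable def theta (d : ℕ) (σ : ℝ)
    (z : EuclideanSpace ℝ (Fin d) × EuclideanSpace ℝ (Fin d)) : ℝ :=
  1 + ‖z.1‖ + ‖z.2‖ ^ (1 / σ)

/-- The anisotropic neighborhood `Ω_{ρ,ε}` (with anisotropy parameter `σ`). -/
noncomputable def aniso (d : ℕ) (σ ρ ε : ℝ)
    (Ω : Set (EuclideanSpace ℝ (Fin d) × EuclideanSpace ℝ (Fin d))) :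
    Set (EuclideanSpace ℝ (Fin d) × EuclideanSpace ℝ (Fin d)) :=
  {z | ∃ w ∈ Ω, ‖z.1 - w.1‖ < ε * theta d σ w ^ ρ ∧ ‖z.2 - w.2‖ < ε * theta d σ w ^ (ρ * σ)}

/-- The constant `C_τ` in the quasi-triangle inequality. -/
noncomputable def Cq (τ : ℝ) : ℝ := if 1 ≤ τ then 1 else 2 ^ (1 / τ - 1)

/-- Euclidean norm of a pair. -/
noncomputable def pairNorm (z : EuclideanSpace ℝ (Fin d) × EuclideanSpace ℝ (Fin d)) : ℝ :=
  Real.sqrt (‖z.1‖ ^ 2 + ‖z.2‖ ^ 2)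

/-- The bracket `⟨z⟩ = (1 + ‖z‖²)^{1/2}` for a pair (Euclidean norm). -/
noncomputable def pairBracket (z : EuclideanSpace ℝ (Fin d) × EuclideanSpace ℝ (Fin d)) : ℝ :=
  Real.sqrt (1 + (‖z.1‖ ^ 2 + ‖z.2‖ ^ 2))

/-- Directional derivative. -/
noncomputable def dirDeriv {V F : Type*} [NormedAddCommGroup V] [NormedSpace ℝ V]
    [NormedAddCommGroup F] [NormedSpace ℝ F] (v : V) (f : V → F) : V → F :=
  fun x => fderiv ℝ f x v

/-- Iterated directional derivative along a list of directions. -/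
noncomputable def listDeriv {V F : Type*} [NormedAddCommGroup V] [NormedSpace ℝ V]
    [NormedAddCommGroup F] [NormedSpace ℝ F] : List V → (V → F) → (V → F)
  | [], f => f
  | v :: vs, f => dirDeriv v (listDeriv vs f)

/-- The directions realizing the partial derivative `∂_x^α ∂_ξ^β`. -/
noncomputable def mdirs (d : ℕ) (α β : Fin d → ℕ) :
    List (EuclideanSpace ℝ (Fin d) × EuclideanSpace ℝ (Fin d)) :=
  ((List.finRange d).flatMap fun i =>
      List.replicate (α i) ((EuclideanSpace.single i (1 : ℝ), 0))) ++
  ((List.finRange d).flatMap fun i =>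
      List.replicate (β i) ((0, EuclideanSpace.single i (1 : ℝ))))

/-- Membership in the anisotropic Shubin symbol class `G_ρ^{r,σ}`. -/
def ShubinG {F : Type*} [NormedAddCommGroup F] [NormedSpace ℝ F]
    (d : ℕ) (ρ r σ : ℝ)
    (a : EuclideanSpace ℝ (Fin d) × EuclideanSpace ℝ (Fin d) → F) : Prop :=
  ContDiff ℝ (⊤ : ℕ∞) a ∧
    ∀ α β : Fin d → ℕ, ∃ C > 0, ∀ z,
      ‖listDeriv (mdirs d α β) a z‖ ≤
        C * theta d σ z ^ (r - ρ * ((∑ i, (α i : ℝ)) + σ * ∑ i, (β i : ℝ)))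

/-- `a` is elliptic in `Γ` (order `r`, parameter `σ`). -/
def EllipticIn (d : ℕ) (σ r : ℝ)
    (a : EuclideanSpace ℝ (Fin d) × EuclideanSpace ℝ (Fin d) → ℂ)
    (Γ : Set (EuclideanSpace ℝ (Fin d) × EuclideanSpace ℝ (Fin d))) : Prop :=
  ∃ C > 0, ∃ R > 0, ∀ z ∈ Γ, R ≤ pairNorm z → C * theta d σ z ^ r ≤ ‖a z‖

/-- `V` is the short-time Fourier transform `V_φ u`. -/
def IsSTFT (d : ℕ) (φ : SchwartzMap (EuclideanSpace ℝ (Fin d)) ℂ)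
    (u : SchwartzMap (EuclideanSpace ℝ (Fin d)) ℂ →L[ℝ] ℂ)
    (V : EuclideanSpace ℝ (Fin d) × EuclideanSpace ℝ (Fin d) → ℂ) : Prop :=
  ∀ x ξ : EuclideanSpace ℝ (Fin d), ∃ g : SchwartzMap (EuclideanSpace ℝ (Fin d)) ℂ,
    (∀ y, g y = Complex.exp (-(Complex.I * ((inner ℝ y ξ : ℝ) : ℂ))) *
        (starRingEnd ℂ) (φ (y - x))) ∧
    V (x, ξ) = ((2 * Real.pi) ^ (-(d : ℝ) / 2) : ℝ) * u g


lemma one_le_Cq {τ : ℝ} (hτ : 0 < τ) : 1 ≤ Cq τ := by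
  unfold Cq
  split
  · exact le_rfl
  · next h =>
    have h1 : (0:ℝ) ≤ 1 / τ - 1 := by
      have : 1 < 1 / τ := by
        rw [lt_div_iff₀ hτ]
        linarith [not_le.mp h]
      linarith
    calc (1:ℝ) = 2 ^ (0:ℝ) := by rw [Real.rpow_zero]
    _ ≤ 2 ^ (1 / τ - 1) := Real.rpow_le_rpow_of_exponent_le one_le_two h1

lemma rpow_add_le_Cq {σ a b : ℝ} (hσ : 0 < σ) (ha : 0 ≤ a) (hb : 0 ≤ b) :
    (a + b) ^ (1 / σ) ≤ Cq σ * (a ^ (1 / σ) + b ^ (1 / σ)) := by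
  unfold Cq
  split
  · next h =>
    rw [one_mul]
    have h0 : (0:ℝ) ≤ 1 / σ := by positivity
    have h1 : (1:ℝ) / σ ≤ 1 := by
      rw [div_le_one hσ]; exact h
    have key := NNReal.rpow_add_le_add_rpow a.toNNReal b.toNNReal h0 h1
    have := NNReal.coe_le_coe.2 key
    simpa [NNReal.coe_rpow, Real.coe_toNNReal _ ha, Real.coe_toNNReal _ hb,
      Real.coe_toNNReal _ (add_nonneg ha hb)] using this
  · next h =>
    have h1 : (1:ℝ) ≤ 1 / σ := by
      rw [le_div_iff₀ hσ]
      linarith [not_le.mp h]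
    have key := NNReal.rpow_add_le_mul_rpow_add_rpow a.toNNReal b.toNNReal h1
    have := NNReal.coe_le_coe.2 key
    simpa [NNReal.coe_rpow, NNReal.coe_mul, Real.coe_toNNReal _ ha, Real.coe_toNNReal _ hb,
      Real.coe_toNNReal _ (add_nonneg ha hb)] using this

/-- if `(x,ξ)` is in the anisotropic `ε`-neighborhood of `(y,η)` with `ε` small,
then `θ_σ(y,η) ≤ C θ_σ(x,ξ)`. -/
theorem stmt1 (d : ℕ) (σ ρ ε : ℝ) (hσ : 0 < σ) (hρ0 : 0 < ρ) (hρ1 : ρ ≤ 1) (hε : 0 < ε)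
    (h1 : ε + ε ^ (1 / σ) * Cq σ < 1)
    (h2 : ε / (1 - ε) ^ σ * (Cq (1 / σ)) ^ 2 < 1) :
    ∃ C : ℝ, 1 ≤ C ∧ ∀ x y ξ η : EuclideanSpace ℝ (Fin d),
      ‖x - y‖ < ε * theta d σ (y, η) ^ ρ →
      ‖ξ - η‖ < ε * theta d σ (y, η) ^ (ρ * σ) →
      theta d σ (y, η) ≤ C * theta d σ (x, ξ) := by
  set Cs := Cq σ with hCs
  have hCs1 : 1 ≤ Cs := one_le_Cq hσ
  set δ : ℝ := ε + ε ^ (1 / σ) * Cs with hδ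
  have hδ0 : 0 < δ := by
    have h3 : 0 ≤ ε ^ (1 / σ) * Cs := mul_nonneg (Real.rpow_nonneg hε.le _) (by linarith)
    rw [hδ]; linarith
  have hδ1 : δ < 1 := h1
  refine ⟨Cs / (1 - δ), ?_, ?_⟩
  · rw [le_div_iff₀ (by linarith)]
    linarith
  intro x y ξ η hx hξ
  set θ := theta d σ (y, η) with hθ
  have hθ1 : 1 ≤ θ := by
    have h2 : (0:ℝ) ≤ ‖η‖ ^ (1 / σ) := Real.rpow_nonneg (norm_nonneg _) _
    have h3 : (0:ℝ) ≤ ‖y‖ := norm_nonneg _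
    simp only [hθ, theta]
    linarith
  have hθ0 : 0 < θ := by linarith
  have hθρ : θ ^ ρ ≤ θ := by
    calc θ ^ ρ ≤ θ ^ (1:ℝ) := Real.rpow_le_rpow_of_exponent_le hθ1 hρ1
    _ = θ := Real.rpow_one θ
  -- bound on ‖y‖
  have hy : ‖y‖ ≤ ‖x‖ + ε * θ := by
    have : ‖y‖ ≤ ‖x‖ + ‖x - y‖ := by
      calc ‖y‖ = ‖x - (x - y)‖ := by rw [sub_sub_cancel]
      _ ≤ ‖x‖ + ‖x - y‖ := norm_sub_le _ _
    have h2 : ε * θ ^ ρ ≤ ε * θ := by nlinarith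
    linarith
  -- bound on ‖η‖ ^ (1/σ)
  have hη : ‖η‖ ^ (1 / σ) ≤ Cs * (‖ξ‖ ^ (1 / σ) + ε ^ (1 / σ) * θ) := by
    have hηle : ‖η‖ ≤ ‖ξ‖ + ‖ξ - η‖ := by
      calc ‖η‖ = ‖ξ - (ξ - η)‖ := by rw [sub_sub_cancel]
      _ ≤ ‖ξ‖ + ‖ξ - η‖ := norm_sub_le _ _
    have step1 : ‖η‖ ^ (1 / σ) ≤ (‖ξ‖ + ‖ξ - η‖) ^ (1 / σ) :=
      Real.rpow_le_rpow (norm_nonneg _) hηle (by positivity)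
    have step2 : (‖ξ‖ + ‖ξ - η‖) ^ (1 / σ) ≤ Cs * (‖ξ‖ ^ (1 / σ) + ‖ξ - η‖ ^ (1 / σ)) :=
      rpow_add_le_Cq hσ (norm_nonneg _) (norm_nonneg _)
    have step3 : ‖ξ - η‖ ^ (1 / σ) ≤ ε ^ (1 / σ) * θ := by
      have b1 : ‖ξ - η‖ ^ (1 / σ) ≤ (ε * θ ^ (ρ * σ)) ^ (1 / σ) :=
        Real.rpow_le_rpow (norm_nonneg _) hξ.le (by positivity)
      have b2 : (ε * θ ^ (ρ * σ)) ^ (1 / σ) = ε ^ (1 / σ) * θ ^ ρ := by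
        rw [Real.mul_rpow hε.le (Real.rpow_nonneg hθ0.le _), ← Real.rpow_mul hθ0.le]
        congr 1
        field_simp
      have b3 : ε ^ (1 / σ) * θ ^ ρ ≤ ε ^ (1 / σ) * θ := by
        have : (0:ℝ) ≤ ε ^ (1 / σ) := Real.rpow_nonneg hε.le _
        nlinarith
      linarith
    calc ‖η‖ ^ (1 / σ) ≤ Cs * (‖ξ‖ ^ (1 / σ) + ‖ξ - η‖ ^ (1 / σ)) := le_trans step1 step2
    _ ≤ Cs * (‖ξ‖ ^ (1 / σ) + ε ^ (1 / σ) * θ) := by nlinarith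
  -- combine
  have hmain : θ ≤ Cs * theta d σ (x, ξ) + δ * θ := by
    have hθdef : θ = 1 + ‖y‖ + ‖η‖ ^ (1 / σ) := rfl
    have htx : theta d σ (x, ξ) = 1 + ‖x‖ + ‖ξ‖ ^ (1 / σ) := rfl
    have hcs : 0 ≤ (Cs - 1) * (1 + ‖x‖) :=
      mul_nonneg (by linarith) (by positivity)
    rw [htx, hδ]
    nlinarith [hy, hη, hθdef, hcs, Real.rpow_nonneg (norm_nonneg ξ) (1 / σ),
      Real.rpow_nonneg hε.le (1 / σ), norm_nonneg x]
  have hfinal : (1 - δ) * θ ≤ Cs * theta d σ (x, ξ) := by linarith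
  rw [div_mul_eq_mul_div, le_div_iff₀ (by linarith : (0:ℝ) < 1 - δ)]
  linarith [hfinal]
end

section
/- Let ∅ ≠ Ω ⊆ ℝ^d × ℝ^d, σ > 0, 0 < ρ ≤ 1, and let 0 < ε < δ < 1 with ε satisfying ε + ε^{1/σ} C_σ < 1 and (ε / (1 − ε)^σ) · C_{1/σ}^2 < 1. Then the topological closure of Ω_{ρ,ε} is contained in Ω_{ρ,δ}. -/
open scoped Real

variable {d : ℕ}

/-- the closure of `Ω_{ρ,ε}` is contained in `Ω_{ρ,δ}` for `ε < δ` with `ε` small. -/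
theorem stmt2 (d : ℕ) (σ ρ ε δ : ℝ)
    (Ω : Set (EuclideanSpace ℝ (Fin d) × EuclideanSpace ℝ (Fin d))) (hΩ : Ω.Nonempty)
    (hσ : 0 < σ) (hρ0 : 0 < ρ) (hρ1 : ρ ≤ 1)
    (hε : 0 < ε) (hεδ : ε < δ) (hδ : δ < 1)
    (h1 : ε + ε ^ (1 / σ) * Cq σ < 1)
    (h2 : ε / (1 - ε) ^ σ * (Cq (1 / σ)) ^ 2 < 1) :
    closure (aniso d σ ρ ε Ω) ⊆ aniso d σ ρ δ Ω := by
  intro z hz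
  rw [Metric.mem_closure_iff] at hz
  obtain ⟨y, hy, hdist⟩ := hz (δ - ε) (by linarith)
  obtain ⟨w, hw, hy1, hy2⟩ := hy
  have hθ : 1 ≤ theta d σ w := by
    have h1 : (0 : ℝ) ≤ ‖w.1‖ := norm_nonneg _
    have h2 : (0 : ℝ) ≤ ‖w.2‖ ^ (1 / σ) := Real.rpow_nonneg (norm_nonneg _) _
    unfold theta; linarith
  have hθρ : 1 ≤ theta d σ w ^ ρ := Real.one_le_rpow hθ hρ0.le
  have hθρσ : 1 ≤ theta d σ w ^ (ρ * σ) :=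
    Real.one_le_rpow hθ (by positivity)
  have hd1 : dist z.1 y.1 < δ - ε :=
    lt_of_le_of_lt (le_max_left _ _) hdist
  have hd2 : dist z.2 y.2 < δ - ε :=
    lt_of_le_of_lt (le_max_right _ _) hdist
  refine ⟨w, hw, ?_, ?_⟩
  · have t : ‖z.1 - w.1‖ ≤ dist z.1 y.1 + ‖y.1 - w.1‖ := by
      rw [dist_eq_norm]
      simpa using norm_sub_le_norm_sub_add_norm_sub z.1 y.1 w.1
    nlinarith [hy1, hθρ, hd1]
  · have t : ‖z.2 - w.2‖ ≤ dist z.2 y.2 + ‖y.2 - w.2‖ := by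
      rw [dist_eq_norm]
      simpa using norm_sub_le_norm_sub_add_norm_sub z.2 y.2 w.2
    nlinarith [hy2, hθρσ, hd2]
end

section
/- Let ∅ ≠ Ω ⊆ ℝ^d × ℝ^d, σ > 0, 0 < ρ ≤ 1 and 0 < ε < δ < 1. Then there exists μ > 0 such that the anisotropic neighborhoods ((ℝ^d × ℝ^d) \ Ω_{ρ,δ})_{ρ,μ} and (Ω_{ρ,ε})_{ρ,μ} are disjoint. -/
open scoped Real

variable {d : ℕ}

lemma theta_ge_one {d : ℕ} (σ : ℝ) (z : EuclideanSpace ℝ (Fin d) × EuclideanSpace ℝ (Fin d)) :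
    (1:ℝ) ≤ theta d σ z := by
  have h1 := norm_nonneg z.1
  have h2 := Real.rpow_nonneg (norm_nonneg z.2) (1/σ)
  unfold theta; linarith

lemma one_le_two_rpow {t : ℝ} (ht : 0 ≤ t) : (1:ℝ) ≤ (2:ℝ) ^ t := by
  calc (1:ℝ) = (2:ℝ) ^ (0:ℝ) := (Real.rpow_zero 2).symm
  _ ≤ (2:ℝ) ^ t := Real.rpow_le_rpow_of_exponent_le one_le_two ht

lemma rpow_add_le_two_rpow (a b t : ℝ) (ha : 0 ≤ a) (hb : 0 ≤ b) (ht : 0 ≤ t) :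
    (a + b) ^ t ≤ 2 ^ t * (a ^ t + b ^ t) := by
  have hmax : a + b ≤ 2 * max a b := by
    rcases le_total a b with h | h
    · rw [max_eq_right h]; linarith
    · rw [max_eq_left h]; linarith
  have hm0 : 0 ≤ max a b := le_trans ha (le_max_left a b)
  calc (a + b) ^ t ≤ (2 * max a b) ^ t := Real.rpow_le_rpow (by linarith) hmax ht
    _ = 2 ^ t * (max a b) ^ t := Real.mul_rpow (by norm_num) hm0
    _ ≤ 2 ^ t * (a ^ t + b ^ t) := by
        have hle : (max a b) ^ t ≤ a ^ t + b ^ t := by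
          rcases le_total a b with h | h
          · rw [max_eq_right h]
            have := Real.rpow_nonneg ha t; linarith
          · rw [max_eq_left h]
            have := Real.rpow_nonneg hb t; linarith
        have h2 : (0:ℝ) ≤ 2 ^ t := (Real.rpow_nonneg (by norm_num) t)
        nlinarith

lemma rpow_sigma_inv {σ x : ℝ} (hσ : 0 < σ) (hx : 0 ≤ x) : (x ^ σ) ^ (1/σ) = x := by
  rw [← Real.rpow_mul hx, mul_one_div_cancel hσ.ne', Real.rpow_one]

/-- Forward slow-variation estimate. -/
lemma theta_perturb {d : ℕ} {σ c : ℝ} (hσ : 0 < σ) (hc0 : 0 ≤ c) (hc1 : c ≤ 1)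
    {w v : EuclideanSpace ℝ (Fin d) × EuclideanSpace ℝ (Fin d)}
    (h1 : ‖v.1 - w.1‖ ≤ c * theta d σ w)
    (h2 : ‖v.2 - w.2‖ ≤ c * theta d σ w ^ σ) :
    theta d σ v ≤ (2 + 2 * 2 ^ (1/σ)) * theta d σ w := by
  set θ := theta d σ w with hθdef
  set C : ℝ := 2 ^ (1/σ) with hCdef
  have hσ' : (0:ℝ) ≤ 1/σ := by positivity
  have hC1 : (1:ℝ) ≤ C := one_le_two_rpow hσ'
  have hθ1 : (1:ℝ) ≤ θ := theta_ge_one σ w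
  have hθσ : (0:ℝ) ≤ θ ^ σ := Real.rpow_nonneg (by linarith) σ
  have hv1 : ‖v.1‖ ≤ ‖w.1‖ + c * θ := by
    have := norm_sub_norm_le v.1 w.1; linarith [norm_sub_norm_le v.1 w.1,
      le_trans (norm_le_norm_add_norm_sub' v.1 w.1) (by linarith : ‖w.1‖ + ‖v.1 - w.1‖ ≤ ‖w.1‖ + c*θ)]
  have hv2 : ‖v.2‖ ≤ ‖w.2‖ + c * θ ^ σ :=
    le_trans (norm_le_norm_add_norm_sub' v.2 w.2) (by linarith)
  have key : ‖v.2‖ ^ (1/σ) ≤ C * (‖w.2‖ ^ (1/σ) + c ^ (1/σ) * θ) := by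
    have s1 : ‖v.2‖ ^ (1/σ) ≤ (‖w.2‖ + c * θ ^ σ) ^ (1/σ) :=
      Real.rpow_le_rpow (norm_nonneg _) hv2 hσ'
    have s2 : (‖w.2‖ + c * θ ^ σ) ^ (1/σ) ≤ C * (‖w.2‖ ^ (1/σ) + (c * θ ^ σ) ^ (1/σ)) :=
      rpow_add_le_two_rpow _ _ _ (norm_nonneg _) (by positivity) hσ'
    have s3 : (c * θ ^ σ) ^ (1/σ) = c ^ (1/σ) * θ := by
      rw [Real.mul_rpow hc0 hθσ, rpow_sigma_inv hσ (by linarith)]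
    rw [s3] at s2; linarith
  have hw1 : 1 + ‖w.1‖ ≤ θ := by
    have := Real.rpow_nonneg (norm_nonneg w.2) (1/σ); unfold θ; unfold theta; linarith
  have hw2 : ‖w.2‖ ^ (1/σ) ≤ θ := by
    have := norm_nonneg w.1; unfold θ; unfold theta; linarith
  have hcσ : c ^ (1/σ) ≤ 1 := Real.rpow_le_one hc0 hc1 hσ'
  have expand : theta d σ v = 1 + ‖v.1‖ + ‖v.2‖ ^ (1/σ) := rfl
  rw [expand]
  have hC0 : (0:ℝ) ≤ C := by linarith
  nlinarith [mul_le_mul_of_nonneg_left hw2 hC0, mul_le_mul_of_nonneg_left hcσ (mul_nonneg hC0 (by linarith : (0:ℝ) ≤ θ))]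

/-- Reverse slow-variation estimate. -/
lemma theta_perturb_rev {d : ℕ} {σ μ : ℝ} (hσ : 0 < σ) (hμ0 : 0 ≤ μ) (hμ1 : μ ≤ 1/4)
    (hμ2 : μ ≤ (1 / (4 * 2 ^ (1/σ))) ^ σ)
    {w z : EuclideanSpace ℝ (Fin d) × EuclideanSpace ℝ (Fin d)}
    (h1 : ‖w.1 - z.1‖ ≤ μ * theta d σ w)
    (h2 : ‖w.2 - z.2‖ ≤ μ * theta d σ w ^ σ) :
    theta d σ w ≤ 2 * 2 ^ (1/σ) * theta d σ z := by
  set θ := theta d σ w with hθdef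
  set C : ℝ := 2 ^ (1/σ) with hCdef
  have hσ' : (0:ℝ) ≤ 1/σ := by positivity
  have hC1 : (1:ℝ) ≤ C := one_le_two_rpow hσ'
  have hθ1 : (1:ℝ) ≤ θ := theta_ge_one σ w
  have hθσ : (0:ℝ) ≤ θ ^ σ := Real.rpow_nonneg (by linarith) σ
  have hμσ : μ ^ (1/σ) ≤ 1 / (4 * C) := by
    have : μ ^ (1/σ) ≤ ((1 / (4 * C)) ^ σ) ^ (1/σ) := Real.rpow_le_rpow hμ0 hμ2 hσ'
    rwa [rpow_sigma_inv hσ (by positivity)] at this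
  have hw1 : ‖w.1‖ ≤ ‖z.1‖ + μ * θ :=
    le_trans (norm_le_norm_add_norm_sub' w.1 z.1) (by linarith)
  have hw2 : ‖w.2‖ ≤ ‖z.2‖ + μ * θ ^ σ :=
    le_trans (norm_le_norm_add_norm_sub' w.2 z.2) (by linarith)
  have key : ‖w.2‖ ^ (1/σ) ≤ C * ‖z.2‖ ^ (1/σ) + (1/4) * θ := by
    have s1 : ‖w.2‖ ^ (1/σ) ≤ (‖z.2‖ + μ * θ ^ σ) ^ (1/σ) :=
      Real.rpow_le_rpow (norm_nonneg _) hw2 hσ'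
    have s2 : (‖z.2‖ + μ * θ ^ σ) ^ (1/σ) ≤ C * (‖z.2‖ ^ (1/σ) + (μ * θ ^ σ) ^ (1/σ)) :=
      rpow_add_le_two_rpow _ _ _ (norm_nonneg _) (by positivity) hσ'
    have s3 : (μ * θ ^ σ) ^ (1/σ) = μ ^ (1/σ) * θ := by
      rw [Real.mul_rpow hμ0 hθσ, rpow_sigma_inv hσ (by linarith)]
    have hCpos : (0:ℝ) < C := by linarith
    have s4 : C * (μ ^ (1/σ) * θ) ≤ (1/4) * θ := by
      have : C * μ ^ (1/σ) ≤ C * (1 / (4*C)) :=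
        mul_le_mul_of_nonneg_left hμσ (by linarith)
      have hc : C * (1 / (4*C)) = 1/4 := by field_simp
      nlinarith [Real.rpow_nonneg hμ0 (1/σ)]
    rw [s3] at s2
    nlinarith
  have hz1 : 1 + ‖z.1‖ + C * ‖z.2‖ ^ (1/σ) ≤ C * theta d σ z := by
    have h := norm_nonneg z.1
    have h2' := Real.rpow_nonneg (norm_nonneg z.2) (1/σ)
    unfold theta
    nlinarith
  have expand : θ = 1 + ‖w.1‖ + ‖w.2‖ ^ (1/σ) := rfl
  nlinarith [expand.le, expand.ge]

/-- Power bound helper. -/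
lemma pow_bound {x T th e σ : ℝ} (hx0 : 0 ≤ x) (hT : 1 ≤ T) (hθ : 1 ≤ th) (hxT : x ≤ T * th)
    (he0 : 0 ≤ e) (heσ : e ≤ 1 + σ) : x ^ e ≤ T ^ (1 + σ) * th ^ e :=
  calc x ^ e ≤ (T * th) ^ e := Real.rpow_le_rpow hx0 hxT he0
  _ = T ^ e * th ^ e := Real.mul_rpow (by linarith) (by linarith)
  _ ≤ T ^ (1 + σ) * th ^ e :=
      mul_le_mul_of_nonneg_right (Real.rpow_le_rpow_of_exponent_le hT heσ)
        (Real.rpow_nonneg (by linarith) e)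

set_option maxHeartbeats 1000000 in
/-- there exists `μ > 0` such that the anisotropic `μ`-neighborhoods of
`(ℝ^{2d}) \ Ω_{ρ,δ}` and of `Ω_{ρ,ε}` are disjoint. -/
theorem stmt3 (d : ℕ) (σ ρ ε δ : ℝ)
    (Ω : Set (EuclideanSpace ℝ (Fin d) × EuclideanSpace ℝ (Fin d))) (hΩ : Ω.Nonempty)
    (hσ : 0 < σ) (hρ0 : 0 < ρ) (hρ1 : ρ ≤ 1)
    (hε : 0 < ε) (hεδ : ε < δ) (hδ : δ < 1) :
    ∃ μ > 0, Disjoint (aniso d σ ρ μ ((aniso d σ ρ δ Ω)ᶜ)) (aniso d σ ρ μ (aniso d σ ρ ε Ω)) := by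
  have hσ' : (0:ℝ) ≤ 1/σ := by positivity
  obtain ⟨C, hC1, hCdef⟩ : ∃ C : ℝ, 1 ≤ C ∧ C = 2 ^ (1/σ) :=
    ⟨_, one_le_two_rpow hσ', rfl⟩
  obtain ⟨K, hK1, hKdef⟩ : ∃ K : ℝ, 1 ≤ K ∧ K = 2 + 2 * C := ⟨_, by linarith, rfl⟩
  obtain ⟨T, hT1, hKT, hTdef⟩ : ∃ T : ℝ, 1 ≤ T ∧ K ≤ T ∧ T = 2 * C * K * K := by
    have h1 : 1 ≤ C * K := by nlinarith [mul_le_mul hC1 hK1 (by norm_num : (0:ℝ) ≤ 1) (by linarith : (0:ℝ) ≤ C)]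
    have h2 : K * 1 ≤ K * (2 * (C * K) - 1) :=
      mul_le_mul_of_nonneg_left (by linarith) (by linarith)
    refine ⟨2 * C * K * K, ?_, ?_, rfl⟩
    · nlinarith [h1, h2]
    · nlinarith [h1, h2]
  obtain ⟨S, hS1, hSdef⟩ : ∃ S : ℝ, 1 ≤ S ∧ S = T ^ (1 + σ) := by
    refine ⟨T ^ (1 + σ), ?_, rfl⟩
    calc (1:ℝ) = T ^ (0:ℝ) := (Real.rpow_zero T).symm
    _ ≤ T ^ (1 + σ) := Real.rpow_le_rpow_of_exponent_le hT1 (by linarith)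
  have hSpos : (0:ℝ) < S := by linarith
  obtain ⟨μ, hμpos, hμ14, hμC, hμ4S⟩ :
      ∃ μ : ℝ, 0 < μ ∧ μ ≤ 1/4 ∧ μ ≤ (1 / (4 * C)) ^ σ ∧ μ * (4 * S) ≤ δ - ε := by
    refine ⟨min (min (1/4) ((1 / (4 * C)) ^ σ)) ((δ - ε) / (4 * S)), ?_, ?_, ?_, ?_⟩
    · apply lt_min (lt_min (by norm_num) (Real.rpow_pos_of_pos (by positivity) σ))
      have : (0:ℝ) < δ - ε := by linarith
      positivity
    · exact le_trans (min_le_left _ _) (min_le_left _ _)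
    · exact le_trans (min_le_left _ _) (min_le_right _ _)
    · have h := min_le_right (min (1/4) ((1 / (4 * C)) ^ σ)) ((δ - ε) / (4 * S))
      exact (le_div_iff₀ (by positivity : (0:ℝ) < 4 * S)).mp h
  refine ⟨μ, hμpos, ?_⟩
  have hμ1 : μ ≤ 1 := by linarith
  rw [Set.disjoint_left]
  rintro z ⟨w, hwc, hw1, hw2⟩ ⟨v, ⟨w₀, hw₀, hv1, hv2⟩, hz1, hz2⟩
  apply hwc
  have hθ₀1 : (1:ℝ) ≤ theta d σ w₀ := theta_ge_one σ w₀
  have hθv1 : (1:ℝ) ≤ theta d σ v := theta_ge_one σ v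
  have hθw1 : (1:ℝ) ≤ theta d σ w := theta_ge_one σ w
  have hθz1 : (1:ℝ) ≤ theta d σ z := theta_ge_one σ z
  have hmono : ∀ th : ℝ, 1 ≤ th → th ^ ρ ≤ th ∧ th ^ (ρ * σ) ≤ th ^ σ := by
    intro th hth
    constructor
    · calc th ^ ρ ≤ th ^ (1:ℝ) := Real.rpow_le_rpow_of_exponent_le hth hρ1
      _ = th := Real.rpow_one th
    · exact Real.rpow_le_rpow_of_exponent_le hth (by nlinarith)
  have hεle1 : ε ≤ 1 := by linarith
  have hρσ : ρ * σ ≤ 1 + σ := by nlinarith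
  have hρσ0 : (0:ℝ) ≤ ρ * σ := by positivity
  have hθv₀ : theta d σ v ≤ K * theta d σ w₀ := by
    rw [hKdef, hCdef]
    refine theta_perturb hσ hε.le hεle1 ?_ ?_
    · exact le_trans hv1.le (mul_le_mul_of_nonneg_left (hmono _ hθ₀1).1 hε.le)
    · exact le_trans hv2.le (mul_le_mul_of_nonneg_left (hmono _ hθ₀1).2 hε.le)
  have hθzv : theta d σ z ≤ K * theta d σ v := by
    rw [hKdef, hCdef]
    refine theta_perturb hσ hμpos.le hμ1 ?_ ?_
    · exact le_trans hz1.le (mul_le_mul_of_nonneg_left (hmono _ hθv1).1 hμpos.le)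
    · exact le_trans hz2.le (mul_le_mul_of_nonneg_left (hmono _ hθv1).2 hμpos.le)
  have hθwz : theta d σ w ≤ 2 * C * theta d σ z := by
    rw [hCdef]
    refine theta_perturb_rev hσ hμpos.le hμ14 (by rw [← hCdef]; exact hμC) ?_ ?_
    · rw [norm_sub_rev]
      exact le_trans hw1.le (mul_le_mul_of_nonneg_left (hmono _ hθw1).1 hμpos.le)
    · rw [norm_sub_rev]
      exact le_trans hw2.le (mul_le_mul_of_nonneg_left (hmono _ hθw1).2 hμpos.le)
  have hθwT : theta d σ w ≤ T * theta d σ w₀ := by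
    have s1 : 2 * C * theta d σ z ≤ 2 * C * (K * theta d σ v) :=
      mul_le_mul_of_nonneg_left hθzv (by linarith)
    have s2 : 2 * C * (K * theta d σ v) ≤ 2 * C * (K * (K * theta d σ w₀)) :=
      mul_le_mul_of_nonneg_left (mul_le_mul_of_nonneg_left hθv₀ (by linarith))
        (by linarith)
    rw [hTdef]
    linarith [s1, s2, hθwz]
  have hθvT : theta d σ v ≤ T * theta d σ w₀ := by
    have := mul_le_mul_of_nonneg_right hKT (by linarith : (0:ℝ) ≤ theta d σ w₀)
    linarith
  have hb1 : theta d σ w ^ ρ ≤ S * theta d σ w₀ ^ ρ := by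
    rw [hSdef]; exact pow_bound (by linarith) hT1 hθ₀1 hθwT hρ0.le (by linarith)
  have hb2 : theta d σ v ^ ρ ≤ S * theta d σ w₀ ^ ρ := by
    rw [hSdef]; exact pow_bound (by linarith) hT1 hθ₀1 hθvT hρ0.le (by linarith)
  have hb3 : theta d σ w ^ (ρ * σ) ≤ S * theta d σ w₀ ^ (ρ * σ) := by
    rw [hSdef]
    exact pow_bound (by linarith) hT1 hθ₀1 hθwT hρσ0 hρσ
  have hb4 : theta d σ v ^ (ρ * σ) ≤ S * theta d σ w₀ ^ (ρ * σ) := by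
    rw [hSdef]
    exact pow_bound (by linarith) hT1 hθ₀1 hθvT hρσ0 hρσ
  have hθ₀ρ : (0:ℝ) < theta d σ w₀ ^ ρ := Real.rpow_pos_of_pos (by linarith) ρ
  have hθ₀ρσ : (0:ℝ) < theta d σ w₀ ^ (ρ * σ) := Real.rpow_pos_of_pos (by linarith) (ρ * σ)
  refine ⟨w₀, hw₀, ?_, ?_⟩
  · have t1 : ‖w.1 - w₀.1‖ ≤ ‖w.1 - z.1‖ + ‖z.1 - v.1‖ + ‖v.1 - w₀.1‖ := by
      have := dist_triangle4 w.1 z.1 v.1 w₀.1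
      simpa [dist_eq_norm] using this
    have e1 : ‖w.1 - z.1‖ < μ * (S * theta d σ w₀ ^ ρ) := by
      rw [norm_sub_rev]
      exact lt_of_lt_of_le hw1 (mul_le_mul_of_nonneg_left hb1 hμpos.le)
    have e2 : ‖z.1 - v.1‖ < μ * (S * theta d σ w₀ ^ ρ) :=
      lt_of_lt_of_le hz1 (mul_le_mul_of_nonneg_left hb2 hμpos.le)
    have e3 : ‖v.1 - w₀.1‖ < ε * theta d σ w₀ ^ ρ := hv1
    have key : μ * (4 * S) * theta d σ w₀ ^ ρ ≤ (δ - ε) * theta d σ w₀ ^ ρ :=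
      mul_le_mul_of_nonneg_right hμ4S hθ₀ρ.le
    have hpos : 0 < μ * S * theta d σ w₀ ^ ρ := by positivity
    linarith [key, t1, e1, e2, e3, hpos]
  · have t1 : ‖w.2 - w₀.2‖ ≤ ‖w.2 - z.2‖ + ‖z.2 - v.2‖ + ‖v.2 - w₀.2‖ := by
      have := dist_triangle4 w.2 z.2 v.2 w₀.2
      simpa [dist_eq_norm] using this
    have e1 : ‖w.2 - z.2‖ < μ * (S * theta d σ w₀ ^ (ρ * σ)) := by
      rw [norm_sub_rev]
      exact lt_of_lt_of_le hw2 (mul_le_mul_of_nonneg_left hb3 hμpos.le)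
    have e2 : ‖z.2 - v.2‖ < μ * (S * theta d σ w₀ ^ (ρ * σ)) :=
      lt_of_lt_of_le hz2 (mul_le_mul_of_nonneg_left hb4 hμpos.le)
    have e3 : ‖v.2 - w₀.2‖ < ε * theta d σ w₀ ^ (ρ * σ) := hv2
    have key : μ * (4 * S) * theta d σ w₀ ^ (ρ * σ) ≤ (δ - ε) * theta d σ w₀ ^ (ρ * σ) :=
      mul_le_mul_of_nonneg_right hμ4S hθ₀ρσ.le
    have hpos : 0 < μ * S * theta d σ w₀ ^ (ρ * σ) := by positivity
    linarith [key, t1, e1, e2, e3, hpos]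
end

section
/- Let σ > 0, 0 < ρ ≤ 1, r ∈ ℝ, let a belong to the anisotropic Shubin class G_ρ^{r,σ}, and suppose a is elliptic in a nonempty set Ω ⊆ ℝ^d × ℝ^d. Then there exists μ > 0 such that a is elliptic in the anisotropic neighborhood Ω_{ρ,μ}. -/
open scoped Real

variable {d : ℕ}

-- basic theta facts
lemma one_le_theta (d : ℕ) (σ : ℝ) (z : EuclideanSpace ℝ (Fin d) × EuclideanSpace ℝ (Fin d)) :
    1 ≤ theta d σ z := by
  have h1 : (0:ℝ) ≤ ‖z.1‖ := norm_nonneg _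
  have h2 : (0:ℝ) ≤ ‖z.2‖ ^ (1/σ) := Real.rpow_nonneg (norm_nonneg _) _
  unfold theta; linarith

lemma theta_pos (d : ℕ) (σ : ℝ) (z : EuclideanSpace ℝ (Fin d) × EuclideanSpace ℝ (Fin d)) :
    0 < theta d σ z := lt_of_lt_of_le one_pos (one_le_theta d σ z)

lemma fst_le_theta (d : ℕ) (σ : ℝ) (z : EuclideanSpace ℝ (Fin d) × EuclideanSpace ℝ (Fin d)) :
    ‖z.1‖ ≤ theta d σ z := by
  have h2 : (0:ℝ) ≤ ‖z.2‖ ^ (1/σ) := Real.rpow_nonneg (norm_nonneg _) _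
  unfold theta; linarith

lemma snd_rpow_le_theta (d : ℕ) (σ : ℝ) (z : EuclideanSpace ℝ (Fin d) × EuclideanSpace ℝ (Fin d)) :
    ‖z.2‖ ^ (1/σ) ≤ theta d σ z := by
  have h1 : (0:ℝ) ≤ ‖z.1‖ := norm_nonneg _
  unfold theta; linarith

-- (A+B)^t ≤ 2^t (A^t + B^t)
lemma add_rpow_le (A B t : ℝ) (hA : 0 ≤ A) (hB : 0 ≤ B) (ht : 0 ≤ t) :
    (A + B) ^ t ≤ 2 ^ t * (A ^ t + B ^ t) := by
  rcases le_total A B with h | h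
  · calc (A + B) ^ t ≤ (2 * B) ^ t := Real.rpow_le_rpow (by linarith) (by linarith) ht
      _ = 2 ^ t * B ^ t := Real.mul_rpow (by norm_num) hB
      _ ≤ 2 ^ t * (A ^ t + B ^ t) := by
          have : (0:ℝ) ≤ A ^ t := Real.rpow_nonneg hA t
          have h2 : (0:ℝ) < 2 ^ t := Real.rpow_pos_of_pos (by norm_num) t
          nlinarith
  · calc (A + B) ^ t ≤ (2 * A) ^ t := Real.rpow_le_rpow (by linarith) (by linarith) ht
      _ = 2 ^ t * A ^ t := Real.mul_rpow (by norm_num) hA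
      _ ≤ 2 ^ t * (A ^ t + B ^ t) := by
          have : (0:ℝ) ≤ B ^ t := Real.rpow_nonneg hB t
          have h2 : (0:ℝ) < 2 ^ t := Real.rpow_pos_of_pos (by norm_num) t
          nlinarith

-- rpow comparison under two-sided bounds
lemma rpow_comp {x y L : ℝ} (s : ℝ) (hx : 1 ≤ x) (hy : 1 ≤ y) (hL : 1 ≤ L)
    (h1 : x ≤ L * y) (h2 : y ≤ L * x) : x ^ s ≤ L ^ |s| * y ^ s := by
  rcases le_or_gt 0 s with hs | hs
  · rw [abs_of_nonneg hs]
    calc x ^ s ≤ (L * y) ^ s := Real.rpow_le_rpow (by linarith) h1 hs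
      _ = L ^ s * y ^ s := Real.mul_rpow (by linarith) (by linarith)
  · rw [abs_of_neg hs]
    have hLpos : (0:ℝ) < L := by linarith
    have hxpos : (0:ℝ) < x := by linarith
    have hypos : (0:ℝ) < y := by linarith
    have hd : y / L ≤ x := (div_le_iff₀' hLpos).mpr h2
    have hdp : 0 < y / L := div_pos hypos hLpos
    calc x ^ s ≤ (y / L) ^ s := Real.rpow_le_rpow_of_nonpos hdp hd hs.le
      _ = y ^ s / L ^ s := Real.div_rpow hypos.le hLpos.le s
      _ = L ^ (-s) * y ^ s := by
          rw [Real.rpow_neg hLpos.le]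
          field_simp

lemma one_add_fst_le_theta (d : ℕ) (σ : ℝ)
    (z : EuclideanSpace ℝ (Fin d) × EuclideanSpace ℝ (Fin d)) :
    1 + ‖z.1‖ ≤ theta d σ z := by
  have h0 : (0:ℝ) ≤ ‖z.2‖ ^ (1/σ) := Real.rpow_nonneg (norm_nonneg _) _
  unfold theta; linarith

lemma theta_rpow_le_theta {d : ℕ} {σ ρ : ℝ} (hρ1 : ρ ≤ 1)
    (w : EuclideanSpace ℝ (Fin d) × EuclideanSpace ℝ (Fin d)) :
    theta d σ w ^ ρ ≤ theta d σ w := by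
  have h := Real.rpow_le_rpow_of_exponent_le (one_le_theta d σ w) hρ1
  rwa [Real.rpow_one] at h

lemma theta_rpow_exp {d : ℕ} {σ ρ : ℝ} (hσ : 0 < σ)
    (w : EuclideanSpace ℝ (Fin d) × EuclideanSpace ℝ (Fin d)) :
    (theta d σ w ^ (ρ * σ)) ^ (1/σ) = theta d σ w ^ ρ := by
  rw [← Real.rpow_mul (theta_pos d σ w).le]
  congr 1
  field_simp

lemma theta_up {d : ℕ} {σ ρ : ℝ} (hσ : 0 < σ) (hρ1 : ρ ≤ 1)
    {p w : EuclideanSpace ℝ (Fin d) × EuclideanSpace ℝ (Fin d)}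
    (h1 : ‖p.1 - w.1‖ ≤ theta d σ w ^ ρ) (h2 : ‖p.2 - w.2‖ ≤ theta d σ w ^ (ρ * σ)) :
    theta d σ p ≤ (2 + 2 * (2:ℝ) ^ (1/σ)) * theta d σ w := by
  set T := theta d σ w with hTdef
  set s := (2:ℝ) ^ (1/σ) with hsdef
  have hT : 1 ≤ T := one_le_theta d σ w
  have hs1 : (1:ℝ) ≤ s := Real.one_le_rpow (by norm_num) (by positivity)
  have hρT : T ^ ρ ≤ T := theta_rpow_le_theta hρ1 w
  have hp1 : ‖p.1‖ ≤ ‖w.1‖ + T ^ ρ := by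
    have := norm_sub_norm_le p.1 w.1
    linarith
  have hp2 : ‖p.2‖ ≤ ‖w.2‖ + T ^ (ρ * σ) := by
    have := norm_sub_norm_le p.2 w.2
    linarith
  have hTρσ : (0:ℝ) ≤ T ^ (ρ * σ) := Real.rpow_nonneg (by linarith) _
  have hrp : ‖p.2‖ ^ (1/σ) ≤ s * (‖w.2‖ ^ (1/σ) + T ^ ρ) := by
    calc ‖p.2‖ ^ (1/σ) ≤ (‖w.2‖ + T ^ (ρ * σ)) ^ (1/σ) :=
          Real.rpow_le_rpow (norm_nonneg _) hp2 (by positivity)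
      _ ≤ s * (‖w.2‖ ^ (1/σ) + (T ^ (ρ * σ)) ^ (1/σ)) :=
          add_rpow_le _ _ _ (norm_nonneg _) hTρσ (by positivity)
      _ = s * (‖w.2‖ ^ (1/σ) + T ^ ρ) := by rw [theta_rpow_exp hσ]
  have hw2 : ‖w.2‖ ^ (1/σ) ≤ T := snd_rpow_le_theta d σ w
  have hw1 : 1 + ‖w.1‖ ≤ T := one_add_fst_le_theta d σ w
  have hs0 : (0:ℝ) ≤ s := by linarith
  have hm1 : s * (‖w.2‖ ^ (1/σ)) ≤ s * T := mul_le_mul_of_nonneg_left hw2 hs0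
  have hm2 : s * (T ^ ρ) ≤ s * T := mul_le_mul_of_nonneg_left hρT hs0
  have hgoal : theta d σ p = 1 + ‖p.1‖ + ‖p.2‖ ^ (1/σ) := rfl
  rw [hgoal]
  linarith

noncomputable def mu1 (σ : ℝ) : ℝ :=
  min 1 (min (1/4) (((4 * (2:ℝ) ^ (1/σ))⁻¹) ^ σ))

lemma mu1_pos {σ : ℝ} (hσ : 0 < σ) : 0 < mu1 σ := by
  unfold mu1
  have : (0:ℝ) < (2:ℝ) ^ (1/σ) := Real.rpow_pos_of_pos (by norm_num) _
  have : (0:ℝ) < ((4 * (2:ℝ) ^ (1/σ))⁻¹) ^ σ := Real.rpow_pos_of_pos (by positivity) _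
  positivity

lemma mu1_le_one (σ : ℝ) : mu1 σ ≤ 1 := min_le_left _ _

lemma mu1_rpow {σ μ : ℝ} (hσ : 0 < σ) (hμ0 : 0 ≤ μ) (hμ : μ ≤ mu1 σ) :
    μ ^ (1/σ) ≤ (4 * (2:ℝ) ^ (1/σ))⁻¹ := by
  have hb : (0:ℝ) < (4 * (2:ℝ) ^ (1/σ))⁻¹ := by
    have : (0:ℝ) < (2:ℝ) ^ (1/σ) := Real.rpow_pos_of_pos (by norm_num) _
    positivity
  have hμ' : μ ≤ ((4 * (2:ℝ) ^ (1/σ))⁻¹) ^ σ :=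
    le_trans hμ (le_trans (min_le_right _ _) (min_le_right _ _))
  calc μ ^ (1/σ) ≤ (((4 * (2:ℝ) ^ (1/σ))⁻¹) ^ σ) ^ (1/σ) :=
        Real.rpow_le_rpow hμ0 hμ' (by positivity)
    _ = (4 * (2:ℝ) ^ (1/σ))⁻¹ := by
        rw [← Real.rpow_mul hb.le]
        rw [mul_one_div_cancel hσ.ne', Real.rpow_one]

lemma theta_down {d : ℕ} {σ ρ μ : ℝ} (hσ : 0 < σ) (hρ1 : ρ ≤ 1)
    (hμ0 : 0 ≤ μ) (hμ : μ ≤ mu1 σ)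
    {p w : EuclideanSpace ℝ (Fin d) × EuclideanSpace ℝ (Fin d)}
    (h1 : ‖p.1 - w.1‖ ≤ μ * theta d σ w ^ ρ) (h2 : ‖p.2 - w.2‖ ≤ μ * theta d σ w ^ (ρ * σ)) :
    theta d σ w ≤ (2 + 2 * (2:ℝ) ^ (1/σ)) * theta d σ p := by
  set T := theta d σ w with hTdef
  set s := (2:ℝ) ^ (1/σ) with hsdef
  have hT : 1 ≤ T := one_le_theta d σ w
  have hs1 : (1:ℝ) ≤ s := Real.one_le_rpow (by norm_num) (by positivity)
  have hs0 : (0:ℝ) ≤ s := by linarith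
  have hρT : T ^ ρ ≤ T := theta_rpow_le_theta hρ1 w
  have hμ4 : μ ≤ 1/4 := le_trans hμ (le_trans (min_le_right _ _) (min_le_left _ _))
  have hμs : μ ^ (1/σ) ≤ (4 * s)⁻¹ := mu1_rpow hσ hμ0 hμ
  have hμσ0 : (0:ℝ) ≤ μ ^ (1/σ) := Real.rpow_nonneg hμ0 _
  have hw1 : ‖w.1‖ ≤ ‖p.1‖ + μ * T := by
    have hn := norm_sub_norm_le w.1 p.1
    have heq : ‖w.1 - p.1‖ = ‖p.1 - w.1‖ := norm_sub_rev _ _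
    have hμT : μ * T ^ ρ ≤ μ * T := mul_le_mul_of_nonneg_left hρT hμ0
    linarith
  have hw2n : ‖w.2‖ ≤ ‖p.2‖ + μ * T ^ (ρ * σ) := by
    have hn := norm_sub_norm_le w.2 p.2
    have heq : ‖w.2 - p.2‖ = ‖p.2 - w.2‖ := norm_sub_rev _ _
    linarith
  have hTρσ0 : (0:ℝ) ≤ T ^ (ρ * σ) := Real.rpow_nonneg (by linarith) _
  have hμTρσ : (0:ℝ) ≤ μ * T ^ (ρ * σ) := by positivity
  have hw2 : ‖w.2‖ ^ (1/σ) ≤ s * (‖p.2‖ ^ (1/σ) + μ ^ (1/σ) * T) := by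
    calc ‖w.2‖ ^ (1/σ) ≤ (‖p.2‖ + μ * T ^ (ρ * σ)) ^ (1/σ) :=
          Real.rpow_le_rpow (norm_nonneg _) hw2n (by positivity)
      _ ≤ s * (‖p.2‖ ^ (1/σ) + (μ * T ^ (ρ * σ)) ^ (1/σ)) :=
          add_rpow_le _ _ _ (norm_nonneg _) hμTρσ (by positivity)
      _ ≤ s * (‖p.2‖ ^ (1/σ) + μ ^ (1/σ) * T) := by
          refine mul_le_mul_of_nonneg_left ?_ hs0
          have he : (μ * T ^ (ρ * σ)) ^ (1/σ) = μ ^ (1/σ) * (T ^ (ρ * σ)) ^ (1/σ) :=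
            Real.mul_rpow hμ0 hTρσ0
          rw [he, theta_rpow_exp hσ]
          have : μ ^ (1/σ) * T ^ ρ ≤ μ ^ (1/σ) * T := mul_le_mul_of_nonneg_left hρT hμσ0
          linarith
  have hsmall : μ + s * μ ^ (1/σ) ≤ 1/2 := by
    have h4s : (0:ℝ) < 4 * s := by linarith
    have hss : s * μ ^ (1/σ) ≤ s * (4*s)⁻¹ := mul_le_mul_of_nonneg_left hμs hs0
    have heq : s * (4*s)⁻¹ = 1/4 := by field_simp
    linarith
  have hTp : 1 ≤ theta d σ p := one_le_theta d σ p
  have hp2 : ‖p.2‖ ^ (1/σ) ≤ theta d σ p := snd_rpow_le_theta d σ p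
  have h1P : 1 + ‖p.1‖ ≤ theta d σ p := one_add_fst_le_theta d σ p
  have hm1 : s * (‖p.2‖ ^ (1/σ)) ≤ s * theta d σ p := mul_le_mul_of_nonneg_left hp2 hs0
  have hm2 : (μ + s * μ ^ (1/σ)) * T ≤ (1/2) * T :=
    mul_le_mul_of_nonneg_right hsmall (by linarith)
  have hTe : T = 1 + ‖w.1‖ + ‖w.2‖ ^ (1/σ) := rfl
  linarith [hw1, hw2, hm1, hm2, h1P, hTe]

-- auxiliary list lemmas
lemma flatMap_single_aux {α β : Type*} (i : α) (v : β) (f : α → List β)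
    (hfi : f i = [v]) (h : ∀ j, j ≠ i → f j = []) :
    ∀ l : List α, l.Nodup → i ∈ l → l.flatMap f = [v] := by
  intro l
  induction l with
  | nil => intro _ h; simp at h
  | cons a t ih =>
    intro hnd hmem
    rcases List.nodup_cons.mp hnd with ⟨hat, hndt⟩
    by_cases hai : a = i
    · subst hai
      have ht : t.flatMap f = [] := by
        apply List.flatMap_eq_nil_iff.mpr
        intro j hj
        exact h j (fun hji => hat (hji ▸ hj))
      simp [List.flatMap_cons, hfi, ht]
    · have := ih hndt (by rcases List.mem_cons.mp hmem with h1 | h1; exacts [absurd h1.symm hai, h1])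
      simp [List.flatMap_cons, h a hai, this]

lemma mdirs_x {d : ℕ} (i : Fin d) :
    mdirs d (Pi.single i 1) 0 = [((EuclideanSpace.single i (1:ℝ)), (0 : EuclideanSpace ℝ (Fin d)))] := by
  unfold mdirs
  have h1 : (List.finRange d).flatMap
      (fun j => List.replicate ((Pi.single i 1 : Fin d → ℕ) j)
        ((EuclideanSpace.single j (1 : ℝ), (0 : EuclideanSpace ℝ (Fin d))))) =
      [((EuclideanSpace.single i (1:ℝ)), (0 : EuclideanSpace ℝ (Fin d)))] := by
    apply flatMap_single_aux i _ _ ?_ ?_ _ (List.nodup_finRange d) (List.mem_finRange i)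
    · simp
    · intro j hj; simp [Pi.single_eq_of_ne hj]
  have h2 : (List.finRange d).flatMap
      (fun j => List.replicate ((0 : Fin d → ℕ) j)
        (((0 : EuclideanSpace ℝ (Fin d)), EuclideanSpace.single j (1 : ℝ)))) = [] := by
    apply List.flatMap_eq_nil_iff.mpr; intro j _; simp
  rw [h1, h2]; simp

lemma mdirs_xi {d : ℕ} (i : Fin d) :
    mdirs d 0 (Pi.single i 1) = [((0 : EuclideanSpace ℝ (Fin d)), EuclideanSpace.single i (1:ℝ))] := by
  unfold mdirs
  have h2 : (List.finRange d).flatMap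
      (fun j => List.replicate ((Pi.single i 1 : Fin d → ℕ) j)
        (((0 : EuclideanSpace ℝ (Fin d)), EuclideanSpace.single j (1 : ℝ)))) =
      [((0 : EuclideanSpace ℝ (Fin d)), EuclideanSpace.single i (1:ℝ))] := by
    apply flatMap_single_aux i _ _ ?_ ?_ _ (List.nodup_finRange d) (List.mem_finRange i)
    · simp
    · intro j hj; simp [Pi.single_eq_of_ne hj]
  have h1 : (List.finRange d).flatMap
      (fun j => List.replicate ((0 : Fin d → ℕ) j)
        ((EuclideanSpace.single j (1 : ℝ), (0 : EuclideanSpace ℝ (Fin d))))) = [] := by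
    apply List.flatMap_eq_nil_iff.mpr; intro j _; simp
  rw [h1, h2]; simp

lemma listDeriv_single {V F : Type*} [NormedAddCommGroup V] [NormedSpace ℝ V]
    [NormedAddCommGroup F] [NormedSpace ℝ F] (v : V) (f : V → F) (z : V) :
    listDeriv [v] f z = fderiv ℝ f z v := by
  simp [listDeriv, dirDeriv]

lemma sum_single_cast {d : ℕ} (i : Fin d) :
    (∑ j, ((Pi.single i 1 : Fin d → ℕ) j : ℝ)) = 1 := by
  rw [Finset.sum_eq_single i]
  · simp
  · intro j _ hj; simp [Pi.single_eq_of_ne hj]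
  · intro h; exact absurd (Finset.mem_univ i) h

lemma sum_zero_cast (d : ℕ) : (∑ j, ((0 : Fin d → ℕ) j : ℝ)) = 0 := by simp


lemma abs_coord_le {d : ℕ} (u : EuclideanSpace ℝ (Fin d)) (i : Fin d) : |u i| ≤ ‖u‖ := by
  rw [EuclideanSpace.norm_eq, ← Real.sqrt_sq_eq_abs]
  apply Real.sqrt_le_sqrt
  refine Finset.single_le_sum (f := fun j => ‖u j‖ ^ 2) (fun j _ => by positivity)
    (Finset.mem_univ i) |>.trans_eq' ?_
  simp [Real.norm_eq_abs, sq_abs]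

lemma eq_sum_single {d : ℕ} (u : EuclideanSpace ℝ (Fin d)) :
    u = ∑ i, u i • EuclideanSpace.single i (1 : ℝ) := by
  ext j
  rw [WithLp.ofLp_sum, Finset.sum_apply]
  simp [EuclideanSpace.single_apply]

lemma pair_decomp {d : ℕ} (u v : EuclideanSpace ℝ (Fin d)) :
    ((u, v) : EuclideanSpace ℝ (Fin d) × EuclideanSpace ℝ (Fin d)) =
      (∑ i, u i • ((EuclideanSpace.single i (1:ℝ)), (0 : EuclideanSpace ℝ (Fin d)))) +
      (∑ i, v i • ((0 : EuclideanSpace ℝ (Fin d)), EuclideanSpace.single i (1:ℝ))) := by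
  refine Prod.ext ?_ ?_
  · simp only [Prod.fst_add, Prod.fst_sum, Prod.smul_fst, smul_zero, Finset.sum_const_zero]
    rw [← eq_sum_single u]; simp
  · simp only [Prod.snd_add, Prod.snd_sum, Prod.smul_snd, smul_zero, Finset.sum_const_zero]
    rw [← eq_sum_single v]; simp

lemma shubin_fderiv {d : ℕ} {ρ r σ : ℝ}
    {a : EuclideanSpace ℝ (Fin d) × EuclideanSpace ℝ (Fin d) → ℂ}
    (ha : ShubinG d ρ r σ a) :
    ∃ Cx > 0, ∃ Cξ > 0, ∀ z (u v : EuclideanSpace ℝ (Fin d)),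
      ‖fderiv ℝ a z (u, v)‖ ≤
        d * Cx * ‖u‖ * theta d σ z ^ (r - ρ) + d * Cξ * ‖v‖ * theta d σ z ^ (r - ρ * σ) := by
  obtain ⟨hsm, hb⟩ := ha
  choose C hCpos hC using hb
  have hs1 : (0:ℝ) ≤ ∑ i, C (Pi.single i 1) 0 :=
    Finset.sum_nonneg fun i _ => (hCpos (Pi.single i 1) 0).le
  have hs2 : (0:ℝ) ≤ ∑ i, C 0 (Pi.single i 1) :=
    Finset.sum_nonneg fun i _ => (hCpos 0 (Pi.single i 1)).le
  refine ⟨1 + ∑ i, C (Pi.single i 1) 0, by linarith, 1 + ∑ i, C 0 (Pi.single i 1), by linarith,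
    fun z u v => ?_⟩
  set Cx := 1 + ∑ i, C (Pi.single i 1) 0 with hCx
  set Cξ := 1 + ∑ i, C 0 (Pi.single i 1) with hCξ
  have hθ : (0:ℝ) < theta d σ z := by
    have h1 : (0:ℝ) ≤ ‖z.1‖ := norm_nonneg _
    have h2 : (0:ℝ) ≤ ‖z.2‖ ^ (1/σ) := Real.rpow_nonneg (norm_nonneg _) _
    unfold theta; linarith
  -- directional bounds
  have hdx : ∀ i : Fin d, ‖fderiv ℝ a z ((EuclideanSpace.single i (1:ℝ)), 0)‖ ≤
      Cx * theta d σ z ^ (r - ρ) := by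
    intro i
    have h := hC (Pi.single i 1) 0 z
    rw [mdirs_x i, listDeriv_single] at h
    have hexp : r - ρ * ((∑ j, ((Pi.single i 1 : Fin d → ℕ) j : ℝ)) + σ * ∑ j, ((0 : Fin d → ℕ) j : ℝ))
        = r - ρ := by rw [sum_single_cast, sum_zero_cast]; ring
    rw [hexp] at h
    refine h.trans ?_
    have hCle : C (Pi.single i 1) 0 ≤ Cx := by
      rw [hCx]
      have : C (Pi.single i 1) 0 ≤ ∑ j, C (Pi.single j 1) 0 :=
        Finset.single_le_sum (f := fun j => C (Pi.single j 1) 0)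
          (fun j _ => (hCpos _ _).le) (Finset.mem_univ i)
      linarith
    exact mul_le_mul_of_nonneg_right hCle (Real.rpow_nonneg hθ.le _)
  have hdxi : ∀ i : Fin d, ‖fderiv ℝ a z (0, (EuclideanSpace.single i (1:ℝ)))‖ ≤
      Cξ * theta d σ z ^ (r - ρ * σ) := by
    intro i
    have h := hC 0 (Pi.single i 1) z
    rw [mdirs_xi i, listDeriv_single] at h
    have hexp : r - ρ * ((∑ j, ((0 : Fin d → ℕ) j : ℝ)) + σ * ∑ j, ((Pi.single i 1 : Fin d → ℕ) j : ℝ))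
        = r - ρ * σ := by rw [sum_single_cast, sum_zero_cast]; ring
    rw [hexp] at h
    refine h.trans ?_
    have hCle : C 0 (Pi.single i 1) ≤ Cξ := by
      rw [hCξ]
      have : C 0 (Pi.single i 1) ≤ ∑ j, C 0 (Pi.single j 1) :=
        Finset.single_le_sum (f := fun j => C 0 (Pi.single j 1))
          (fun j _ => (hCpos _ _).le) (Finset.mem_univ i)
      linarith
    exact mul_le_mul_of_nonneg_right hCle (Real.rpow_nonneg hθ.le _)
  -- expansion
  set D := fderiv ℝ a z with hD
  have hDval : D (u, v) =
      (∑ i, u i • D ((EuclideanSpace.single i (1:ℝ)), 0)) +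
      (∑ i, v i • D (0, (EuclideanSpace.single i (1:ℝ)))) := by
    rw [pair_decomp u v, map_add, map_sum, map_sum]
    simp only [map_smul]
  rw [hDval]
  have hsum1 : ‖∑ i, u i • D ((EuclideanSpace.single i (1:ℝ)), 0)‖ ≤
      d * Cx * ‖u‖ * theta d σ z ^ (r - ρ) := by
    calc ‖∑ i, u i • D ((EuclideanSpace.single i (1:ℝ)), 0)‖
        ≤ ∑ i, ‖u i • D ((EuclideanSpace.single i (1:ℝ)), 0)‖ := norm_sum_le _ _
      _ ≤ ∑ _i : Fin d, ‖u‖ * (Cx * theta d σ z ^ (r - ρ)) := by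
          refine Finset.sum_le_sum fun i _ => ?_
          rw [norm_smul, Real.norm_eq_abs]
          exact mul_le_mul (abs_coord_le u i) (hdx i) (norm_nonneg _) (norm_nonneg _)
      _ = d * Cx * ‖u‖ * theta d σ z ^ (r - ρ) := by
          rw [Finset.sum_const, Finset.card_univ, Fintype.card_fin]; ring
  have hsum2 : ‖∑ i, v i • D (0, (EuclideanSpace.single i (1:ℝ)))‖ ≤
      d * Cξ * ‖v‖ * theta d σ z ^ (r - ρ * σ) := by
    calc ‖∑ i, v i • D (0, (EuclideanSpace.single i (1:ℝ)))‖
        ≤ ∑ i, ‖v i • D (0, (EuclideanSpace.single i (1:ℝ)))‖ := norm_sum_le _ _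
      _ ≤ ∑ _i : Fin d, ‖v‖ * (Cξ * theta d σ z ^ (r - ρ * σ)) := by
          refine Finset.sum_le_sum fun i _ => ?_
          rw [norm_smul, Real.norm_eq_abs]
          exact mul_le_mul (abs_coord_le v i) (hdxi i) (norm_nonneg _) (norm_nonneg _)
      _ = d * Cξ * ‖v‖ * theta d σ z ^ (r - ρ * σ) := by
          rw [Finset.sum_const, Finset.card_univ, Fintype.card_fin]; ring
  exact (norm_add_le _ _).trans (add_le_add hsum1 hsum2)



-- pairNorm lemmas
lemma fst_le_pairNorm {d : ℕ} (z : EuclideanSpace ℝ (Fin d) × EuclideanSpace ℝ (Fin d)) :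
    ‖z.1‖ ≤ pairNorm z := by
  have h := Real.sqrt_le_sqrt (le_add_of_nonneg_right (sq_nonneg ‖z.2‖) :
    ‖z.1‖^2 ≤ ‖z.1‖^2 + ‖z.2‖^2)
  rwa [Real.sqrt_sq (norm_nonneg _)] at h

lemma snd_le_pairNorm {d : ℕ} (z : EuclideanSpace ℝ (Fin d) × EuclideanSpace ℝ (Fin d)) :
    ‖z.2‖ ≤ pairNorm z := by
  have h := Real.sqrt_le_sqrt (le_add_of_nonneg_left (sq_nonneg ‖z.1‖) :
    ‖z.2‖^2 ≤ ‖z.1‖^2 + ‖z.2‖^2)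
  rwa [Real.sqrt_sq (norm_nonneg _)] at h

lemma pairNorm_le_add {d : ℕ} (z : EuclideanSpace ℝ (Fin d) × EuclideanSpace ℝ (Fin d)) :
    pairNorm z ≤ ‖z.1‖ + ‖z.2‖ := by
  have h := Real.sqrt_le_sqrt (show ‖z.1‖^2 + ‖z.2‖^2 ≤ (‖z.1‖ + ‖z.2‖)^2 by
    nlinarith [norm_nonneg z.1, norm_nonneg z.2])
  rwa [Real.sqrt_sq (by positivity)] at h

lemma snd_le_theta_rpow {d : ℕ} {σ : ℝ} (hσ : 0 < σ)
    (z : EuclideanSpace ℝ (Fin d) × EuclideanSpace ℝ (Fin d)) :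
    ‖z.2‖ ≤ theta d σ z ^ σ := by
  have h : ‖z.2‖ = (‖z.2‖ ^ (1/σ)) ^ σ := by
    rw [← Real.rpow_mul (norm_nonneg _), one_div_mul_cancel hσ.ne', Real.rpow_one]
  rw [h]
  exact Real.rpow_le_rpow (Real.rpow_nonneg (norm_nonneg _) _) (snd_rpow_le_theta d σ z) hσ.le



set_option maxHeartbeats 1000000 in
/-- ellipticity in a set implies ellipticity in an anisotropic neighborhood. -/
theorem stmt7 (d : ℕ) (σ ρ r : ℝ) (hσ : 0 < σ) (hρ0 : 0 < ρ) (hρ1 : ρ ≤ 1)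
    (a : EuclideanSpace ℝ (Fin d) × EuclideanSpace ℝ (Fin d) → ℂ)
    (ha : ShubinG d ρ r σ a)
    (Ω : Set (EuclideanSpace ℝ (Fin d) × EuclideanSpace ℝ (Fin d))) (hΩ : Ω.Nonempty)
    (hell : EllipticIn d σ r a Ω) :
    ∃ μ > 0, EllipticIn d σ r a (aniso d σ ρ μ Ω) := by
  obtain ⟨C0, hC0, R0, hR0, hellp⟩ := hell
  obtain ⟨Cx, hCxp, Cξ, hCξp, hDb⟩ := shubin_fderiv ha
  have hsm := ha.1
  obtain ⟨s, hsdef⟩ : ∃ x : ℝ, x = (2:ℝ) ^ (1/σ) := ⟨_, rfl⟩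
  have hs1 : (1:ℝ) ≤ s := by
    rw [hsdef]; exact Real.one_le_rpow (by norm_num) (by positivity)
  obtain ⟨K, hKdef⟩ : ∃ x : ℝ, x = 2 + 2 * s := ⟨_, rfl⟩
  have hK1 : (1:ℝ) ≤ K := by rw [hKdef]; linarith
  have hK0 : (0:ℝ) < K := by linarith
  have hKr1 : (0:ℝ) < K ^ |r - ρ| := Real.rpow_pos_of_pos hK0 _
  have hKr2 : (0:ℝ) < K ^ |r - ρ * σ| := Real.rpow_pos_of_pos hK0 _
  have hKr : (0:ℝ) < K ^ |r| := Real.rpow_pos_of_pos hK0 _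
  obtain ⟨M, hMdef⟩ : ∃ x : ℝ,
      x = (d:ℝ) * Cx * K ^ |r - ρ| + (d:ℝ) * Cξ * K ^ |r - ρ * σ| + 1 := ⟨_, rfl⟩
  have hM : (0:ℝ) < M := by
    rw [hMdef]
    have h1 : (0:ℝ) ≤ (d:ℝ) * Cx * K ^ |r - ρ| := by positivity
    have h2 : (0:ℝ) ≤ (d:ℝ) * Cξ * K ^ |r - ρ * σ| := by positivity
    linarith
  obtain ⟨μ, hμdef⟩ : ∃ x : ℝ, x = min (mu1 σ) (C0 / (2 * M)) := ⟨_, rfl⟩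
  have hμpos : 0 < μ := by
    rw [hμdef]; exact lt_min (mu1_pos hσ) (by positivity)
  have hμ1 : μ ≤ mu1 σ := by rw [hμdef]; exact min_le_left _ _
  have hμle1 : μ ≤ 1 := hμ1.trans (mu1_le_one σ)
  have hμM : μ * M ≤ C0 / 2 := by
    have h : μ ≤ C0 / (2 * M) := by rw [hμdef]; exact min_le_right _ _
    calc μ * M ≤ (C0 / (2 * M)) * M := mul_le_mul_of_nonneg_right h hM.le
      _ = C0 / 2 := by field_simp
  obtain ⟨B, hBdef⟩ : ∃ x : ℝ, x = 1 + R0 + R0 ^ (1/σ) := ⟨_, rfl⟩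
  have hB1 : (1:ℝ) ≤ B := by
    have h0 : (0:ℝ) ≤ R0 ^ (1/σ) := Real.rpow_nonneg hR0.le _
    rw [hBdef]; linarith
  have hKB0 : (0:ℝ) < K * B := mul_pos hK0 (by linarith)
  have hKBσ : (0:ℝ) < (K * B) ^ σ := Real.rpow_pos_of_pos hKB0 _
  refine ⟨μ, hμpos, C0 / (2 * K ^ |r|), by positivity,
    K * B + (K * B) ^ σ + 1, by linarith [hKB0, hKBσ], ?_⟩
  rintro z ⟨w, hwΩ, hz1, hz2⟩ hRz
  have hθw0 : (0:ℝ) < theta d σ w := theta_pos d σ w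
  have hθz0 : (0:ℝ) < theta d σ z := theta_pos d σ z
  have hd1 : ‖z.1 - w.1‖ ≤ μ * theta d σ w ^ ρ := hz1.le
  have hd2 : ‖z.2 - w.2‖ ≤ μ * theta d σ w ^ (ρ * σ) := hz2.le
  have hd1' : ‖z.1 - w.1‖ ≤ theta d σ w ^ ρ :=
    hd1.trans (mul_le_of_le_one_left (Real.rpow_nonneg hθw0.le _) hμle1)
  have hd2' : ‖z.2 - w.2‖ ≤ theta d σ w ^ (ρ * σ) :=
    hd2.trans (mul_le_of_le_one_left (Real.rpow_nonneg hθw0.le _) hμle1)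
  have hup : theta d σ z ≤ K * theta d σ w := by
    rw [hKdef, hsdef]; exact theta_up hσ hρ1 hd1' hd2'
  have hdown : theta d σ w ≤ K * theta d σ z := by
    rw [hKdef, hsdef]; exact theta_down hσ hρ1 hμpos.le hμ1 hd1 hd2
  -- pairNorm w is large
  have hRw : R0 ≤ pairNorm w := by
    by_contra hlt
    push_neg at hlt
    have hw2' : ‖w.2‖ ≤ R0 := le_trans (snd_le_pairNorm w) hlt.le
    have hw1' : ‖w.1‖ ≤ R0 := le_trans (fst_le_pairNorm w) hlt.le
    have hθw : theta d σ w ≤ B := by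
      have h2 : ‖w.2‖ ^ (1/σ) ≤ R0 ^ (1/σ) :=
        Real.rpow_le_rpow (norm_nonneg _) hw2' (by positivity)
      have he : theta d σ w = 1 + ‖w.1‖ + ‖w.2‖ ^ (1/σ) := rfl
      rw [he, hBdef]; linarith
    have hθz : theta d σ z ≤ K * B := hup.trans (mul_le_mul_of_nonneg_left hθw hK0.le)
    have h1 : ‖z.1‖ ≤ K * B - 1 := by
      have := one_add_fst_le_theta d σ z; linarith
    have h2 : ‖z.2‖ ≤ (K * B) ^ σ := by
      refine (snd_le_theta_rpow hσ z).trans ?_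
      exact Real.rpow_le_rpow hθz0.le hθz hσ.le
    have hpz : pairNorm z ≤ K * B - 1 + (K * B) ^ σ := by
      have := pairNorm_le_add z; linarith
    linarith
  have hellw := hellp w hwΩ hRw
  -- mean value estimate along the segment
  obtain ⟨γ, hγdef⟩ : ∃ g : ℝ → EuclideanSpace ℝ (Fin d) × EuclideanSpace ℝ (Fin d),
      g = fun t => w + t • (z - w) := ⟨_, rfl⟩
  have hγ1 : ∀ t : ℝ, (γ t).1 - w.1 = t • (z.1 - w.1) := by
    intro t
    rw [hγdef]
    simp [Prod.fst_add, Prod.smul_fst, Prod.fst_sub, add_sub_cancel_left]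
  have hγ2 : ∀ t : ℝ, (γ t).2 - w.2 = t • (z.2 - w.2) := by
    intro t
    rw [hγdef]
    simp [Prod.snd_add, Prod.smul_snd, Prod.snd_sub, add_sub_cancel_left]
  have hdisp1 : ∀ t ∈ Set.Icc (0:ℝ) 1, ‖(γ t).1 - w.1‖ ≤ μ * theta d σ w ^ ρ := by
    intro t ht
    rw [hγ1 t, norm_smul, Real.norm_eq_abs, abs_of_nonneg ht.1]
    calc t * ‖z.1 - w.1‖ ≤ 1 * ‖z.1 - w.1‖ :=
          mul_le_mul_of_nonneg_right ht.2 (norm_nonneg _)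
      _ = ‖z.1 - w.1‖ := one_mul _
      _ ≤ _ := hd1
  have hdisp2 : ∀ t ∈ Set.Icc (0:ℝ) 1, ‖(γ t).2 - w.2‖ ≤ μ * theta d σ w ^ (ρ * σ) := by
    intro t ht
    rw [hγ2 t, norm_smul, Real.norm_eq_abs, abs_of_nonneg ht.1]
    calc t * ‖z.2 - w.2‖ ≤ 1 * ‖z.2 - w.2‖ :=
          mul_le_mul_of_nonneg_right ht.2 (norm_nonneg _)
      _ = ‖z.2 - w.2‖ := one_mul _
      _ ≤ _ := hd2
  have hγd : ∀ t : ℝ, HasDerivAt γ (z - w) t := by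
    intro t
    rw [hγdef]
    have h := ((hasDerivAt_id t).smul_const (z - w)).const_add w
    simpa using h
  have hfd : ∀ t : ℝ, HasDerivAt (fun t => a (γ t)) (fderiv ℝ a (γ t) (z - w)) t := by
    intro t
    exact ((hsm.differentiable (by simp) (γ t)).hasFDerivAt).comp_hasDerivAt t (hγd t)
  have hzw : z - w = ((z.1 - w.1, z.2 - w.2) :
      EuclideanSpace ℝ (Fin d) × EuclideanSpace ℝ (Fin d)) := rfl
  have hbound : ∀ t ∈ Set.Ico (0:ℝ) 1, ‖fderiv ℝ a (γ t) (z - w)‖ ≤ μ * M * theta d σ w ^ r := by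
    intro t ht
    have ht' : t ∈ Set.Icc (0:ℝ) 1 := ⟨ht.1, ht.2.le⟩
    have hp1 := hdisp1 t ht'
    have hp2 := hdisp2 t ht'
    have hp1' : ‖(γ t).1 - w.1‖ ≤ theta d σ w ^ ρ :=
      hp1.trans (mul_le_of_le_one_left (Real.rpow_nonneg hθw0.le _) hμle1)
    have hp2' : ‖(γ t).2 - w.2‖ ≤ theta d σ w ^ (ρ * σ) :=
      hp2.trans (mul_le_of_le_one_left (Real.rpow_nonneg hθw0.le _) hμle1)
    have hupt : theta d σ (γ t) ≤ K * theta d σ w := by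
      rw [hKdef, hsdef]; exact theta_up hσ hρ1 hp1' hp2'
    have hdownt : theta d σ w ≤ K * theta d σ (γ t) := by
      rw [hKdef, hsdef]; exact theta_down hσ hρ1 hμpos.le hμ1 hp1 hp2
    have hc1 : theta d σ (γ t) ^ (r - ρ) ≤ K ^ |r - ρ| * theta d σ w ^ (r - ρ) :=
      rpow_comp (r - ρ) (one_le_theta d σ (γ t)) (one_le_theta d σ w) hK1 hupt hdownt
    have hc2 : theta d σ (γ t) ^ (r - ρ * σ) ≤ K ^ |r - ρ * σ| * theta d σ w ^ (r - ρ * σ) :=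
      rpow_comp (r - ρ * σ) (one_le_theta d σ (γ t)) (one_le_theta d σ w) hK1 hupt hdownt
    rw [hzw]
    refine (hDb (γ t) (z.1 - w.1) (z.2 - w.2)).trans ?_
    have hmul1 : theta d σ w ^ ρ * theta d σ w ^ (r - ρ) = theta d σ w ^ r := by
      rw [← Real.rpow_add hθw0]; congr 1; ring
    have hmul2 : theta d σ w ^ (ρ * σ) * theta d σ w ^ (r - ρ * σ) = theta d σ w ^ r := by
      rw [← Real.rpow_add hθw0]; congr 1; ring
    have hθρnn : (0:ℝ) ≤ theta d σ w ^ ρ := Real.rpow_nonneg hθw0.le _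
    have hθρσnn : (0:ℝ) ≤ theta d σ w ^ (ρ * σ) := Real.rpow_nonneg hθw0.le _
    have e1 : (d:ℝ) * Cx * ‖z.1 - w.1‖ * theta d σ (γ t) ^ (r - ρ) ≤
        (d:ℝ) * Cx * (μ * theta d σ w ^ ρ) * (K ^ |r - ρ| * theta d σ w ^ (r - ρ)) := by
      have hnn1 : (0:ℝ) ≤ (d:ℝ) * Cx := by positivity
      have hθnn : (0:ℝ) ≤ theta d σ (γ t) ^ (r - ρ) := Real.rpow_nonneg (theta_pos d σ _).le _
      calc (d:ℝ) * Cx * ‖z.1 - w.1‖ * theta d σ (γ t) ^ (r - ρ)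
          ≤ (d:ℝ) * Cx * (μ * theta d σ w ^ ρ) * theta d σ (γ t) ^ (r - ρ) := by
            have h := mul_le_mul_of_nonneg_left hd1 hnn1
            exact mul_le_mul_of_nonneg_right (by linarith) hθnn
        _ ≤ (d:ℝ) * Cx * (μ * theta d σ w ^ ρ) * (K ^ |r - ρ| * theta d σ w ^ (r - ρ)) := by
            have hnn2 : (0:ℝ) ≤ (d:ℝ) * Cx * (μ * theta d σ w ^ ρ) := by positivity
            exact mul_le_mul_of_nonneg_left hc1 hnn2
    have e2 : (d:ℝ) * Cξ * ‖z.2 - w.2‖ * theta d σ (γ t) ^ (r - ρ * σ) ≤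
        (d:ℝ) * Cξ * (μ * theta d σ w ^ (ρ * σ)) *
          (K ^ |r - ρ * σ| * theta d σ w ^ (r - ρ * σ)) := by
      have hnn1 : (0:ℝ) ≤ (d:ℝ) * Cξ := by positivity
      have hθnn : (0:ℝ) ≤ theta d σ (γ t) ^ (r - ρ * σ) := Real.rpow_nonneg (theta_pos d σ _).le _
      calc (d:ℝ) * Cξ * ‖z.2 - w.2‖ * theta d σ (γ t) ^ (r - ρ * σ)
          ≤ (d:ℝ) * Cξ * (μ * theta d σ w ^ (ρ * σ)) * theta d σ (γ t) ^ (r - ρ * σ) := by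
            have h := mul_le_mul_of_nonneg_left hd2 hnn1
            exact mul_le_mul_of_nonneg_right (by linarith) hθnn
        _ ≤ _ := by
            have hnn2 : (0:ℝ) ≤ (d:ℝ) * Cξ * (μ * theta d σ w ^ (ρ * σ)) := by positivity
            exact mul_le_mul_of_nonneg_left hc2 hnn2
    have eq1 : (d:ℝ) * Cx * (μ * theta d σ w ^ ρ) * (K ^ |r - ρ| * theta d σ w ^ (r - ρ)) =
        μ * ((d:ℝ) * Cx * K ^ |r - ρ|) * theta d σ w ^ r := by
      rw [← hmul1]; ring
    have eq2 : (d:ℝ) * Cξ * (μ * theta d σ w ^ (ρ * σ)) *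
        (K ^ |r - ρ * σ| * theta d σ w ^ (r - ρ * σ)) =
        μ * ((d:ℝ) * Cξ * K ^ |r - ρ * σ|) * theta d σ w ^ r := by
      rw [← hmul2]; ring
    have hθr : (0:ℝ) ≤ theta d σ w ^ r := Real.rpow_nonneg hθw0.le _
    have hsum : μ * ((d:ℝ) * Cx * K ^ |r - ρ|) + μ * ((d:ℝ) * Cξ * K ^ |r - ρ * σ|) ≤ μ * M := by
      have hMexp : μ * M = μ * ((d:ℝ) * Cx * K ^ |r - ρ|) + μ * ((d:ℝ) * Cξ * K ^ |r - ρ * σ|) + μ := by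
        rw [hMdef]; ring
      linarith [hμpos.le]
    have hfin : μ * ((d:ℝ) * Cx * K ^ |r - ρ|) * theta d σ w ^ r +
        μ * ((d:ℝ) * Cξ * K ^ |r - ρ * σ|) * theta d σ w ^ r ≤ μ * M * theta d σ w ^ r := by
      have h := mul_le_mul_of_nonneg_right hsum hθr
      have hexp : (μ * ((d:ℝ) * Cx * K ^ |r - ρ|) + μ * ((d:ℝ) * Cξ * K ^ |r - ρ * σ|)) * theta d σ w ^ r =
          μ * ((d:ℝ) * Cx * K ^ |r - ρ|) * theta d σ w ^ r +
          μ * ((d:ℝ) * Cξ * K ^ |r - ρ * σ|) * theta d σ w ^ r := by ring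
      linarith
    rw [eq1] at e1
    rw [eq2] at e2
    linarith
  have hMVT : ‖a z - a w‖ ≤ μ * M * theta d σ w ^ r := by
    have h := norm_image_sub_le_of_norm_deriv_le_segment_01'
      (f := fun t => a (γ t)) (f' := fun t => fderiv ℝ a (γ t) (z - w))
      (fun t _ => (hfd t).hasDerivWithinAt) hbound
    have h1 : γ 1 = z := by rw [hγdef]; simp
    have h0 : γ 0 = w := by rw [hγdef]; simp
    simpa only [h1, h0] using h
  -- conclusion
  have hθr : (0:ℝ) < theta d σ w ^ r := Real.rpow_pos_of_pos hθw0 _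
  have hμMθ : μ * M * theta d σ w ^ r ≤ (C0 / 2) * theta d σ w ^ r :=
    mul_le_mul_of_nonneg_right hμM hθr.le
  have haz : (C0 / 2) * theta d σ w ^ r ≤ ‖a z‖ := by
    have htri : ‖a w‖ ≤ ‖a z‖ + ‖a z - a w‖ := by
      have h := norm_sub_norm_le (a w) (a z)
      have h2 : ‖a w - a z‖ = ‖a z - a w‖ := norm_sub_rev _ _
      linarith
    linarith
  have hcmp : theta d σ z ^ r ≤ K ^ |r| * theta d σ w ^ r :=
    rpow_comp r (one_le_theta d σ z) (one_le_theta d σ w) hK1 hup hdown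
  calc C0 / (2 * K ^ |r|) * theta d σ z ^ r
      ≤ C0 / (2 * K ^ |r|) * (K ^ |r| * theta d σ w ^ r) :=
        mul_le_mul_of_nonneg_left hcmp (by positivity)
    _ = (C0 / 2) * theta d σ w ^ r := by field_simp
    _ ≤ ‖a z‖ := haz
end

section
/- Let σ > 0, 0 < ρ ≤ 1, let ∅ ≠ Ω ⊆ ℝ^d × ℝ^d and let 0 < δ < ε. Then there exists μ > 0 such that: whenever (x, ξ) ∈ Ω_{ρ,δ} and (y, η) ∈ ℝ^d × ℝ^d satisfies ‖(y, η)‖^{(1/ρ)·max(σ, 1/σ)} ≤ μ ‖(x, ξ)‖, one has (x − y, ξ − η) ∈ Ω_{ρ,ε}. -/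
open scoped Real

variable {d : ℕ}

set_option maxHeartbeats 2000000 in
/-- small perturbations stay in the larger anisotropic neighborhood. -/
theorem stmt9 (d : ℕ) (σ ρ δ ε : ℝ) (hσ : 0 < σ) (hρ0 : 0 < ρ) (hρ1 : ρ ≤ 1)
    (Ω : Set (EuclideanSpace ℝ (Fin d) × EuclideanSpace ℝ (Fin d))) (hΩ : Ω.Nonempty)
    (hδ : 0 < δ) (hδε : δ < ε) :
    ∃ μ > 0, ∀ x ξ y η : EuclideanSpace ℝ (Fin d),
      (x, ξ) ∈ aniso d σ ρ δ Ω →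
      pairNorm (y, η) ^ ((1 / ρ) * max σ (1 / σ)) ≤ μ * pairNorm (x, ξ) →
      (x - y, ξ - η) ∈ aniso d σ ρ ε Ω := by
  set M := max σ (1 / σ) with hMdef
  have hM0 : 0 < M := lt_of_lt_of_le hσ (le_max_left _ _)
  have h1M : 1 ≤ M := by
    rcases le_total 1 σ with h | h
    · exact le_trans h (le_max_left _ _)
    · exact le_trans (one_le_one_div hσ h) (le_max_right _ _)
  set m := max 1 σ with hmdef
  have hm0 : 0 < m := lt_of_lt_of_le one_pos (le_max_left _ _)
  have hmM : m ≤ M := max_le h1M (le_max_left _ _)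
  have hmσM : m ≤ σ * M := by
    refine max_le ?_ ?_
    · have := mul_le_mul_of_nonneg_left (le_max_right σ (1 / σ)) hσ.le
      rwa [mul_one_div, div_self hσ.ne'] at this
    · calc σ = σ * 1 := (mul_one σ).symm
        _ ≤ σ * M := mul_le_mul_of_nonneg_left h1M hσ.le
  have hεδ : 0 < ε - δ := by linarith
  refine ⟨(ε - δ) ^ (M / ρ) / (2 * (1 + δ)),
    div_pos (Real.rpow_pos_of_pos hεδ _) (by positivity), ?_⟩
  intro x ξ y η hxξ hle
  obtain ⟨w, hwΩ, h1, h2⟩ := hxξ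
  set θ := theta d σ w with hθdef
  have hθ1 : 1 ≤ θ := by
    have h0 : 0 ≤ ‖w.1‖ := norm_nonneg _
    have h0' : 0 ≤ ‖w.2‖ ^ (1 / σ) := Real.rpow_nonneg (norm_nonneg _) _
    simp only [hθdef, theta]
    linarith
  have hθ0 : 0 < θ := lt_of_lt_of_le one_pos hθ1
  have hw1 : ‖w.1‖ ≤ θ := by
    have h0' : 0 ≤ ‖w.2‖ ^ (1 / σ) := Real.rpow_nonneg (norm_nonneg _) _
    simp only [hθdef, theta]; linarith
  have hw2 : ‖w.2‖ ≤ θ ^ σ := by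
    have hle2 : ‖w.2‖ ^ (1 / σ) ≤ θ := by
      have h0 : 0 ≤ ‖w.1‖ := norm_nonneg _
      simp only [hθdef, theta]; linarith
    have := Real.rpow_le_rpow (Real.rpow_nonneg (norm_nonneg _) _) hle2 hσ.le
    rwa [← Real.rpow_mul (norm_nonneg _), one_div_mul_cancel hσ.ne',
      Real.rpow_one] at this
  have hθρ : θ ^ ρ ≤ θ := by
    have := Real.rpow_le_rpow_of_exponent_le hθ1 hρ1
    rwa [Real.rpow_one] at this
  have hθρσ : θ ^ (ρ * σ) ≤ θ ^ σ :=
    Real.rpow_le_rpow_of_exponent_le hθ1 (by nlinarith)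
  have hθm1 : θ ≤ θ ^ m := by
    have := Real.rpow_le_rpow_of_exponent_le hθ1 (le_max_left 1 σ)
    rwa [Real.rpow_one] at this
  have hθmσ : θ ^ σ ≤ θ ^ m :=
    Real.rpow_le_rpow_of_exponent_le hθ1 (le_max_right 1 σ)
  have hx : ‖x‖ ≤ (1 + δ) * θ := by
    have := norm_sub_norm_le x w.1
    nlinarith
  have hξ : ‖ξ‖ ≤ (1 + δ) * θ ^ σ := by
    have := norm_sub_norm_le ξ w.2
    nlinarith
  have hθm0 : 0 < θ ^ m := Real.rpow_pos_of_pos hθ0 m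
  have hP : pairNorm (x, ξ) ≤ 2 * (1 + δ) * θ ^ m := by
    have h1' : pairNorm (x, ξ) ≤ ‖x‖ + ‖ξ‖ := by
      have hval : pairNorm (x, ξ) = Real.sqrt (‖x‖ ^ 2 + ‖ξ‖ ^ 2) := rfl
      rw [hval]
      have := Real.sqrt_le_sqrt (show ‖x‖ ^ 2 + ‖ξ‖ ^ 2 ≤ (‖x‖ + ‖ξ‖) ^ 2 by
        nlinarith [norm_nonneg x, norm_nonneg ξ])
      rwa [Real.sqrt_sq (by positivity)] at this
    nlinarith
  set N := pairNorm (y, η) with hNdef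
  have hN0 : 0 ≤ N := Real.sqrt_nonneg _
  have key : N ≤ (ε - δ) * θ ^ (m * (ρ / M)) := by
    have h3 : N ^ (M / ρ) ≤ (ε - δ) ^ (M / ρ) * θ ^ m := by
      have : (1 / ρ) * M = M / ρ := by ring
      rw [this] at hle
      calc N ^ (M / ρ) ≤ (ε - δ) ^ (M / ρ) / (2 * (1 + δ)) * pairNorm (x, ξ) := hle
        _ ≤ (ε - δ) ^ (M / ρ) / (2 * (1 + δ)) * (2 * (1 + δ) * θ ^ m) := by
            have : 0 ≤ (ε - δ) ^ (M / ρ) / (2 * (1 + δ)) := by positivity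
            exact mul_le_mul_of_nonneg_left hP this
        _ = (ε - δ) ^ (M / ρ) * θ ^ m := by field_simp
    have h4 : (N ^ (M / ρ)) ^ (ρ / M) ≤ ((ε - δ) ^ (M / ρ) * θ ^ m) ^ (ρ / M) :=
      Real.rpow_le_rpow (Real.rpow_nonneg hN0 _) h3 (by positivity)
    have h5 : (N ^ (M / ρ)) ^ (ρ / M) = N := by
      rw [← Real.rpow_mul hN0, div_mul_div_comm, mul_comm, div_self (by positivity),
        Real.rpow_one]
    have h6 : ((ε - δ) ^ (M / ρ) * θ ^ m) ^ (ρ / M) = (ε - δ) * θ ^ (m * (ρ / M)) := by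
      rw [Real.mul_rpow (by positivity) (by positivity), ← Real.rpow_mul hεδ.le,
        div_mul_div_comm, mul_comm M ρ, div_self (by positivity), Real.rpow_one,
        ← Real.rpow_mul hθ0.le]
    rw [h5, h6] at h4
    exact h4
  have he1 : m * (ρ / M) ≤ ρ := by
    rw [mul_div_assoc', div_le_iff₀ hM0]
    calc m * ρ = ρ * m := mul_comm _ _
      _ ≤ ρ * M := mul_le_mul_of_nonneg_left hmM hρ0.le
  have he2 : m * (ρ / M) ≤ ρ * σ := by
    rw [mul_div_assoc', div_le_iff₀ hM0]
    calc m * ρ = ρ * m := mul_comm _ _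
      _ ≤ ρ * (σ * M) := mul_le_mul_of_nonneg_left hmσM hρ0.le
      _ = ρ * σ * M := by ring
  have hNρ : N ≤ (ε - δ) * θ ^ ρ := by
    calc N ≤ (ε - δ) * θ ^ (m * (ρ / M)) := key
      _ ≤ (ε - δ) * θ ^ ρ := by
          exact mul_le_mul_of_nonneg_left (Real.rpow_le_rpow_of_exponent_le hθ1 he1) hεδ.le
  have hNρσ : N ≤ (ε - δ) * θ ^ (ρ * σ) := by
    calc N ≤ (ε - δ) * θ ^ (m * (ρ / M)) := key
      _ ≤ (ε - δ) * θ ^ (ρ * σ) := by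
          exact mul_le_mul_of_nonneg_left (Real.rpow_le_rpow_of_exponent_le hθ1 he2) hεδ.le
  have hNval : N = Real.sqrt (‖y‖ ^ 2 + ‖η‖ ^ 2) := rfl
  have hyN : ‖y‖ ≤ N := by
    rw [hNval]
    exact Real.le_sqrt_of_sq_le (by linarith [sq_nonneg ‖η‖])
  have hηN : ‖η‖ ≤ N := by
    rw [hNval]
    exact Real.le_sqrt_of_sq_le (by linarith [sq_nonneg ‖y‖])
  have h1' : ‖x - w.1‖ < δ * θ ^ ρ := h1
  have h2' : ‖ξ - w.2‖ < δ * θ ^ (ρ * σ) := h2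
  refine ⟨w, hwΩ, ?_, ?_⟩
  · show ‖x - y - w.1‖ < ε * θ ^ ρ
    have htri : ‖x - y - w.1‖ ≤ ‖x - w.1‖ + ‖y‖ := by
      rw [sub_right_comm]; exact norm_sub_le _ _
    have hy' : ‖y‖ ≤ (ε - δ) * θ ^ ρ := hyN.trans hNρ
    linarith
  · show ‖ξ - η - w.2‖ < ε * θ ^ (ρ * σ)
    have htri : ‖ξ - η - w.2‖ ≤ ‖ξ - w.2‖ + ‖η‖ := by
      rw [sub_right_comm]; exact norm_sub_le _ _
    have hη' : ‖η‖ ≤ (ε - δ) * θ ^ (ρ * σ) := hηN.trans hNρσ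
    linarith
end

section
/- Let σ > 0, 0 < ρ ≤ 1, let ∅ ≠ Ω ⊆ ℝ^d × ℝ^d and let 0 < ε < δ. Then there exists a constant C > 0 (depending on σ, ρ, ε, δ) such that ‖(x, ξ)‖^{ρ·min(σ, 1/σ)} ≤ C ‖(y, η) − (x, ξ)‖ for all (x, ξ) ∈ Ω_{ρ,ε} and all (y, η) ∈ (ℝ^d × ℝ^d) \ Ω_{ρ,δ}. -/
open scoped Real

variable {d : ℕ}

set_option maxHeartbeats 1000000 in
/-- separation estimate between `Ω_{ρ,ε}` and the complement of `Ω_{ρ,δ}`. -/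
theorem stmt10 (d : ℕ) (σ ρ ε δ : ℝ) (hσ : 0 < σ) (hρ0 : 0 < ρ) (hρ1 : ρ ≤ 1)
    (Ω : Set (EuclideanSpace ℝ (Fin d) × EuclideanSpace ℝ (Fin d))) (hΩ : Ω.Nonempty)
    (hε : 0 < ε) (hεδ : ε < δ) :
    ∃ C > 0, ∀ z ∈ aniso d σ ρ ε Ω, ∀ w ∉ aniso d σ ρ δ Ω,
      pairNorm z ^ (ρ * min σ (1 / σ)) ≤ C * pairNorm (w - z) := by
  have hmin0 : 0 < min σ (1 / σ) := lt_min hσ (by positivity)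
  have hm0 : 0 ≤ ρ * min σ (1 / σ) := by positivity
  refine ⟨(2 * (1 + ε)) ^ (ρ * min σ (1 / σ)) / (δ - ε), by
    have : 0 < δ - ε := by linarith
    positivity, ?_⟩
  rintro z ⟨y, hyΩ, h1, h2⟩ w hw
  set θ := theta d σ y with hθdef
  have hθ1 : (1 : ℝ) ≤ θ := by
    have h2' : 0 ≤ ‖y.2‖ ^ (1 / σ) := Real.rpow_nonneg (norm_nonneg _) _
    have h1' := norm_nonneg y.1
    simp only [hθdef, theta]
    linarith
  have hθ0 : (0 : ℝ) ≤ θ := by linarith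
  -- the exponent appearing in both bounds
  set q : ℝ := ρ * min 1 σ with hq
  have hq0 : 0 ≤ q := by positivity
  -- lower bound for pairNorm (w - z)
  have hlow : (δ - ε) * θ ^ q ≤ pairNorm (w - z) := by
    simp only [aniso, Set.mem_setOf_eq, not_exists] at hw
    have hwy' : ¬(‖w.1 - y.1‖ < δ * theta d σ y ^ ρ ∧
        ‖w.2 - y.2‖ < δ * theta d σ y ^ (ρ * σ)) := fun hab => hw y ⟨hyΩ, hab⟩
    rw [not_and_or] at hwy'
    have key : ∃ e : ℝ, q ≤ e ∧ (δ - ε) * θ ^ e ≤ pairNorm (w - z) := by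
      rcases hwy' with hc | hc
      · refine ⟨ρ, by
          have : min 1 σ ≤ 1 := min_le_left _ _
          nlinarith, ?_⟩
        have hA : δ * θ ^ ρ ≤ ‖w.1 - y.1‖ := not_lt.mp hc
        have htri : ‖w.1 - y.1‖ ≤ ‖w.1 - z.1‖ + ‖z.1 - y.1‖ := by
          have : w.1 - y.1 = (w.1 - z.1) + (z.1 - y.1) := by abel
          rw [this]; exact norm_add_le _ _
        have h1' : ‖w.1 - z.1‖ ≥ (δ - ε) * θ ^ ρ := by nlinarith [h1]
        have hP : ‖w.1 - z.1‖ ≤ pairNorm (w - z) := by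
          rw [pairNorm, show (w - z).1 = w.1 - z.1 from rfl]
          rw [show (w - z).2 = w.2 - z.2 from rfl]
          rw [Real.le_sqrt (norm_nonneg _)]
          nlinarith [sq_nonneg ‖w.2 - z.2‖]
          all_goals positivity
        linarith
      · refine ⟨ρ * σ, by
          have : min 1 σ ≤ σ := min_le_right _ _
          nlinarith, ?_⟩
        have hA : δ * θ ^ (ρ * σ) ≤ ‖w.2 - y.2‖ := not_lt.mp hc
        have htri : ‖w.2 - y.2‖ ≤ ‖w.2 - z.2‖ + ‖z.2 - y.2‖ := by
          have : w.2 - y.2 = (w.2 - z.2) + (z.2 - y.2) := by abel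
          rw [this]; exact norm_add_le _ _
        have h2' : ‖w.2 - z.2‖ ≥ (δ - ε) * θ ^ (ρ * σ) := by nlinarith [h2]
        have hP : ‖w.2 - z.2‖ ≤ pairNorm (w - z) := by
          rw [pairNorm, show (w - z).1 = w.1 - z.1 from rfl]
          rw [show (w - z).2 = w.2 - z.2 from rfl]
          rw [Real.le_sqrt (norm_nonneg _)]
          nlinarith [sq_nonneg ‖w.1 - z.1‖]
          all_goals positivity
        linarith
    obtain ⟨e, hqe, hbound⟩ := key
    have : θ ^ q ≤ θ ^ e := Real.rpow_le_rpow_of_exponent_le hθ1 hqe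
    nlinarith
  -- upper bound for pairNorm z
  set M : ℝ := max 1 σ with hM
  have hθM : (1 : ℝ) ≤ θ ^ M := Real.one_le_rpow hθ1 (by positivity)
  have hup : pairNorm z ≤ 2 * (1 + ε) * θ ^ M := by
    have hz1 : ‖z.1‖ ≤ (1 + ε) * θ ^ M := by
      have ht1 : ‖z.1‖ ≤ ‖z.1 - y.1‖ + ‖y.1‖ := by
        have : z.1 = (z.1 - y.1) + y.1 := by abel
        nth_rewrite 1 [this]; exact norm_add_le _ _
      have hy1 : ‖y.1‖ ≤ θ := by
        have : 0 ≤ ‖y.2‖ ^ (1 / σ) := Real.rpow_nonneg (norm_nonneg _) _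
        simp only [hθdef, theta]; linarith
      have hθρ : θ ^ ρ ≤ θ ^ M := Real.rpow_le_rpow_of_exponent_le hθ1
        (le_trans hρ1 (le_max_left _ _))
      have hθ1M : θ ≤ θ ^ M := by
        calc θ = θ ^ (1 : ℝ) := (Real.rpow_one θ).symm
        _ ≤ θ ^ M := Real.rpow_le_rpow_of_exponent_le hθ1 (le_max_left _ _)
      nlinarith [h1]
    have hz2 : ‖z.2‖ ≤ (1 + ε) * θ ^ M := by
      have ht2 : ‖z.2‖ ≤ ‖z.2 - y.2‖ + ‖y.2‖ := by
        have : z.2 = (z.2 - y.2) + y.2 := by abel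
        nth_rewrite 1 [this]; exact norm_add_le _ _
      have hy2 : ‖y.2‖ ≤ θ ^ σ := by
        have hb : ‖y.2‖ ^ (1 / σ) ≤ θ := by
          have := norm_nonneg y.1
          simp only [hθdef, theta]; linarith
        have := Real.rpow_le_rpow (Real.rpow_nonneg (norm_nonneg _) _) hb hσ.le
        rwa [← Real.rpow_mul (norm_nonneg _),
          one_div, inv_mul_cancel₀ hσ.ne', Real.rpow_one] at this
      have hσM : θ ^ σ ≤ θ ^ M := Real.rpow_le_rpow_of_exponent_le hθ1 (le_max_right _ _)
      have hρσM : θ ^ (ρ * σ) ≤ θ ^ M := Real.rpow_le_rpow_of_exponent_le hθ1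
        (le_trans (by nlinarith) (le_max_right 1 σ))
      nlinarith [h2]
    have hP : pairNorm z ≤ ‖z.1‖ + ‖z.2‖ := by
      rw [pairNorm]
      have : Real.sqrt (‖z.1‖ ^ 2 + ‖z.2‖ ^ 2) ≤ Real.sqrt ((‖z.1‖ + ‖z.2‖) ^ 2) := by
        apply Real.sqrt_le_sqrt
        nlinarith [norm_nonneg z.1, norm_nonneg z.2]
      rwa [Real.sqrt_sq (by positivity)] at this
    linarith
  -- exponent identity
  have hMq : M * (ρ * min σ (1 / σ)) = q := by
    rw [hq, hM]
    rcases le_total σ 1 with h | h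
    · rw [min_eq_left (show σ ≤ 1 / σ by rw [le_div_iff₀ hσ]; nlinarith),
        min_eq_right h, max_eq_left h]; ring
    · rw [min_eq_right (show 1 / σ ≤ σ by rw [div_le_iff₀ hσ]; nlinarith),
        min_eq_left h, max_eq_right h]; field_simp
  -- put it together
  have hPz0 : 0 ≤ pairNorm z := Real.sqrt_nonneg _
  have step1 : pairNorm z ^ (ρ * min σ (1 / σ)) ≤
      (2 * (1 + ε) * θ ^ M) ^ (ρ * min σ (1 / σ)) :=
    Real.rpow_le_rpow hPz0 hup hm0
  have step2 : (2 * (1 + ε) * θ ^ M) ^ (ρ * min σ (1 / σ)) =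
      (2 * (1 + ε)) ^ (ρ * min σ (1 / σ)) * θ ^ q := by
    rw [Real.mul_rpow (by positivity) (by positivity), ← Real.rpow_mul hθ0, hMq]
  calc pairNorm z ^ (ρ * min σ (1 / σ))
      ≤ (2 * (1 + ε)) ^ (ρ * min σ (1 / σ)) * θ ^ q := by rw [← step2]; exact step1
    _ = (2 * (1 + ε)) ^ (ρ * min σ (1 / σ)) / (δ - ε) * ((δ - ε) * θ ^ q) := by
        have hne : δ - ε ≠ 0 := by intro h; linarith [h]
        field_simp
    _ ≤ (2 * (1 + ε)) ^ (ρ * min σ (1 / σ)) / (δ - ε) * pairNorm (w - z) := by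
        apply mul_le_mul_of_nonneg_left hlow
        have : 0 < δ - ε := by linarith
        positivity
end

section
/- Let σ > 0, 0 < ρ ≤ 1, ε > 0 and let ∅ ≠ Ω ⊆ ℝ^d × ℝ^d. Define 𝒥(x, ξ) = (ξ, −x). Then (𝒥 Ω)^{1/σ}_{ρ, C_σ^{−2·max(1,σ)} ε} ⊆ 𝒥(Ω^{σ}_{ρ,ε}), where the superscript on the anisotropic neighborhood indicates the anisotropy parameter used in its definition. -/
open scoped Real

variable {d : ℕ}

lemma real_superadd {x y p : ℝ} (hx : 0 ≤ x) (hy : 0 ≤ y) (hp : 1 ≤ p) :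
    x ^ p + y ^ p ≤ (x + y) ^ p := by
  lift x to NNReal using hx
  lift y to NNReal using hy
  exact_mod_cast NNReal.add_rpow_le_rpow_add x y hp

lemma real_twofold {x y p : ℝ} (hx : 0 ≤ x) (hy : 0 ≤ y) (hp : 1 ≤ p) :
    (x + y) ^ p ≤ 2 ^ (p - 1) * (x ^ p + y ^ p) := by
  lift x to NNReal using hx
  lift y to NNReal using hy
  exact_mod_cast NNReal.rpow_add_le_mul_rpow_add_rpow x y hp

lemma key_ineq {σ : ℝ} (hσ : 0 < σ) {a b : ℝ} (ha : 0 ≤ a) (hb : 0 ≤ b) :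
    1 ≤ Cq σ ^ (2 * max 1 σ) ∧
    1 + b + a ^ σ ≤ Cq σ ^ (2 * max 1 σ) * (1 + a + b ^ (1 / σ)) ^ σ ∧
    (1 + b + a ^ σ) ^ (1 / σ) ≤ Cq σ ^ (2 * max 1 σ) * (1 + a + b ^ (1 / σ)) := by
  have ht0 : (0:ℝ) ≤ 1 + a + b ^ (1/σ) := by positivity
  have hs0 : (0:ℝ) ≤ 1 + b + a ^ σ := by positivity
  have hσσ : (1/σ) * σ = 1 := by field_simp
  rcases le_or_gt 1 σ with h1 | h1
  · -- σ ≥ 1 : constant is 1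
    have hC : Cq σ = 1 := if_pos h1
    have hK : Cq σ ^ (2 * max 1 σ) = 1 := by rw [hC, Real.one_rpow]
    have L1 : 1 + b + a ^ σ ≤ (1 + a + b ^ (1/σ)) ^ σ := by
      have e1 : (1:ℝ) + a ^ σ ≤ (1 + a) ^ σ := by
        have h := real_superadd (by norm_num : (0:ℝ) ≤ 1) ha h1
        rwa [Real.one_rpow] at h
      have e2 : (1 + a) ^ σ + b ≤ (1 + a + b ^ (1/σ)) ^ σ := by
        have h := real_superadd (by positivity : (0:ℝ) ≤ 1 + a)
          (by positivity : (0:ℝ) ≤ b ^ (1/σ)) h1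
        rwa [← Real.rpow_mul hb, hσσ, Real.rpow_one] at h
      linarith
    refine ⟨by rw [hK], by rw [hK, one_mul]; exact L1, ?_⟩
    rw [hK, one_mul]
    calc (1 + b + a ^ σ) ^ (1/σ) ≤ ((1 + a + b ^ (1/σ)) ^ σ) ^ (1/σ) :=
          Real.rpow_le_rpow hs0 L1 (by positivity)
      _ = 1 + a + b ^ (1/σ) := by
          rw [← Real.rpow_mul ht0, mul_comm, hσσ, Real.rpow_one]
  · -- σ < 1
    have hp1 : 1 ≤ 1/σ := by rw [le_div_iff₀ hσ]; linarith
    have hC : Cq σ = (2:ℝ) ^ (1/σ - 1) := if_neg (not_le.mpr h1)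
    have hmax : max 1 σ = 1 := max_eq_left h1.le
    have hD : (1:ℝ) ≤ (2:ℝ) ^ (1/σ - 1) := by
      calc (1:ℝ) = 2 ^ (0:ℝ) := (Real.rpow_zero 2).symm
        _ ≤ (2:ℝ) ^ (1/σ - 1) := Real.rpow_le_rpow_of_exponent_le one_le_two (by linarith)
    have hDpos : (0:ℝ) < (2:ℝ) ^ (1/σ - 1) := Real.rpow_pos_of_pos (by norm_num) _
    have hK : Cq σ ^ (2 * max 1 σ) = (2:ℝ) ^ (1/σ - 1) * (2:ℝ) ^ (1/σ - 1) := by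
      have h2 : ∀ x : ℝ, 0 < x → x ^ (2:ℝ) = x * x := fun x hx => by
        rw [show (2:ℝ) = (1:ℝ) + 1 by norm_num, Real.rpow_add hx, Real.rpow_one]
      rw [hC, hmax, mul_one, h2 _ hDpos]
    have hK1 : 1 ≤ Cq σ ^ (2 * max 1 σ) := by
      rw [hK]; nlinarith
    -- L2 first
    have L2 : (1 + b + a ^ σ) ^ (1/σ) ≤ Cq σ ^ (2 * max 1 σ) * (1 + a + b ^ (1/σ)) := by
      have e1 : ((1 + b) + a ^ σ) ^ (1/σ) ≤
          (2:ℝ) ^ (1/σ - 1) * ((1 + b) ^ (1/σ) + (a ^ σ) ^ (1/σ)) :=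
        real_twofold (by positivity) (by positivity) hp1
      have e2 : (1 + b) ^ (1/σ) ≤ (2:ℝ) ^ (1/σ - 1) * (1 + b ^ (1/σ)) := by
        have h := real_twofold (by norm_num : (0:ℝ) ≤ 1) hb hp1
        rwa [Real.one_rpow] at h
      have e3 : (a ^ σ) ^ (1/σ) = a := by
        rw [← Real.rpow_mul ha, mul_comm, hσσ, Real.rpow_one]
      rw [e3] at e1
      have hbp : (0:ℝ) ≤ b ^ (1/σ) := by positivity
      rw [hK]
      have hDD : (2:ℝ) ^ (1/σ - 1) ≤ (2:ℝ) ^ (1/σ - 1) * (2:ℝ) ^ (1/σ - 1) := by nlinarith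
      calc (1 + b + a ^ σ) ^ (1/σ) ≤ (2:ℝ) ^ (1/σ - 1) * ((1 + b) ^ (1/σ) + a) := e1
        _ ≤ (2:ℝ) ^ (1/σ - 1) * ((2:ℝ) ^ (1/σ - 1) * (1 + b ^ (1/σ)) + a) :=
            mul_le_mul_of_nonneg_left (by linarith) hDpos.le
        _ = (2:ℝ) ^ (1/σ - 1) * (2:ℝ) ^ (1/σ - 1) * (1 + b ^ (1/σ)) + (2:ℝ) ^ (1/σ - 1) * a := by ring
        _ ≤ (2:ℝ) ^ (1/σ - 1) * (2:ℝ) ^ (1/σ - 1) * (1 + b ^ (1/σ))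
              + (2:ℝ) ^ (1/σ - 1) * (2:ℝ) ^ (1/σ - 1) * a := by nlinarith
        _ = (2:ℝ) ^ (1/σ - 1) * (2:ℝ) ^ (1/σ - 1) * (1 + a + b ^ (1/σ)) := by ring
    refine ⟨hK1, ?_, L2⟩
    -- L1 from L2
    have hKpos : 0 < Cq σ ^ (2 * max 1 σ) := lt_of_lt_of_le one_pos hK1
    calc 1 + b + a ^ σ = ((1 + b + a ^ σ) ^ (1/σ)) ^ σ := by
          rw [← Real.rpow_mul hs0, hσσ, Real.rpow_one]
      _ ≤ (Cq σ ^ (2 * max 1 σ) * (1 + a + b ^ (1/σ))) ^ σ :=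
          Real.rpow_le_rpow (by positivity) L2 hσ.le
      _ = (Cq σ ^ (2 * max 1 σ)) ^ σ * (1 + a + b ^ (1/σ)) ^ σ :=
          Real.mul_rpow hKpos.le ht0
      _ ≤ Cq σ ^ (2 * max 1 σ) * (1 + a + b ^ (1/σ)) ^ σ := by
          have h3 : (Cq σ ^ (2 * max 1 σ)) ^ σ ≤ Cq σ ^ (2 * max 1 σ) := by
            calc (Cq σ ^ (2 * max 1 σ)) ^ σ ≤ (Cq σ ^ (2 * max 1 σ)) ^ (1:ℝ) :=
                  Real.rpow_le_rpow_of_exponent_le hK1 h1.le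
              _ = Cq σ ^ (2 * max 1 σ) := Real.rpow_one _
          exact mul_le_mul_of_nonneg_right h3 (by positivity)

lemma step_ineq {K ε ρ u v : ℝ} (hK : 1 ≤ K) (hε : 0 < ε) (hρ0 : 0 < ρ) (hρ1 : ρ ≤ 1)
    (hu : 0 ≤ u) (hv : 0 ≤ v) (huv : u ≤ K * v) :
    K⁻¹ * ε * u ^ ρ ≤ ε * v ^ ρ := by
  have hK0 : 0 < K := lt_of_lt_of_le one_pos hK
  have h1 : u ^ ρ ≤ (K * v) ^ ρ := Real.rpow_le_rpow hu huv hρ0.le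
  have h2 : (K * v) ^ ρ = K ^ ρ * v ^ ρ := Real.mul_rpow hK0.le hv
  have h3 : K ^ ρ ≤ K := by
    calc K ^ ρ ≤ K ^ (1:ℝ) := Real.rpow_le_rpow_of_exponent_le hK hρ1
      _ = K := Real.rpow_one K
  have hvρ : (0:ℝ) ≤ v ^ ρ := Real.rpow_nonneg hv ρ
  calc K⁻¹ * ε * u ^ ρ ≤ K⁻¹ * ε * (K ^ ρ * v ^ ρ) := by
        refine mul_le_mul_of_nonneg_left (h2 ▸ h1) (by positivity)
    _ ≤ K⁻¹ * ε * (K * v ^ ρ) := by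
        refine mul_le_mul_of_nonneg_left (mul_le_mul_of_nonneg_right h3 hvρ) (by positivity)
    _ = (K⁻¹ * K) * (ε * v ^ ρ) := by ring
    _ = ε * v ^ ρ := by rw [inv_mul_cancel₀ hK0.ne', one_mul]

/-- behavior of anisotropic neighborhoods under the rotation
`𝒥(x,ξ) = (ξ,−x)`, exchanging anisotropy parameters `σ` and `1/σ`. -/
theorem stmt12 (d : ℕ) (σ ρ ε : ℝ) (hσ : 0 < σ) (hρ0 : 0 < ρ) (hρ1 : ρ ≤ 1) (hε : 0 < ε)
    (Ω : Set (EuclideanSpace ℝ (Fin d) × EuclideanSpace ℝ (Fin d))) (hΩ : Ω.Nonempty) :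
    aniso d (1 / σ) ρ ((Cq σ) ^ (-(2 * max 1 σ)) * ε)
        ((fun z : EuclideanSpace ℝ (Fin d) × EuclideanSpace ℝ (Fin d) => (z.2, -z.1)) '' Ω)
      ⊆ (fun z : EuclideanSpace ℝ (Fin d) × EuclideanSpace ℝ (Fin d) => (z.2, -z.1)) ''
          (aniso d σ ρ ε Ω) := by
  rintro z ⟨w', ⟨w, hw, rfl⟩, h1, h2⟩
  obtain ⟨hK1, L1, L2⟩ := key_ineq hσ (norm_nonneg w.1) (norm_nonneg w.2)
  set K := Cq σ ^ (2 * max 1 σ) with hKdef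
  have hK0 : (0:ℝ) < K := lt_of_lt_of_le one_pos hK1
  have hCq0 : (0:ℝ) ≤ Cq σ := by unfold Cq; split <;> positivity
  have hεeq : Cq σ ^ (-(2 * max 1 σ)) = K⁻¹ := by rw [Real.rpow_neg hCq0]
  have hs0 : (0:ℝ) ≤ 1 + ‖w.2‖ + ‖w.1‖ ^ σ := by positivity
  have ht0 : (0:ℝ) ≤ 1 + ‖w.1‖ + ‖w.2‖ ^ (1/σ) := by positivity
  simp only [theta, norm_neg, one_div_one_div, hεeq] at h1 h2
  refine ⟨(-z.2, z.1), ⟨w, hw, ?_, ?_⟩, by simp⟩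
  · -- first coordinate
    have hnorm : ‖(-z.2, z.1).1 - w.1‖ = ‖z.2 - -w.1‖ := by
      rw [show (-z.2, z.1).1 - w.1 = -(z.2 - -w.1) by abel, norm_neg]
    have hbound : K⁻¹ * ε * (1 + ‖w.2‖ + ‖w.1‖ ^ σ) ^ (ρ * (1/σ))
        ≤ ε * theta d σ w ^ ρ := by
      rw [mul_comm ρ (1/σ), Real.rpow_mul hs0]
      exact step_ineq hK1 hε hρ0 hρ1 (Real.rpow_nonneg hs0 _) ht0 L2
    calc ‖(-z.2, z.1).1 - w.1‖ = ‖z.2 - -w.1‖ := hnorm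
      _ < K⁻¹ * ε * (1 + ‖w.2‖ + ‖w.1‖ ^ σ) ^ (ρ * (1/σ)) := h2
      _ ≤ ε * theta d σ w ^ ρ := hbound
  · -- second coordinate
    have hbound : K⁻¹ * ε * (1 + ‖w.2‖ + ‖w.1‖ ^ σ) ^ ρ
        ≤ ε * theta d σ w ^ (ρ * σ) := by
      rw [mul_comm ρ σ, show theta d σ w = 1 + ‖w.1‖ + ‖w.2‖ ^ (1/σ) from rfl,
        Real.rpow_mul ht0]
      exact step_ineq hK1 hε hρ0 hρ1 hs0 (Real.rpow_nonneg ht0 σ) L1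
    calc ‖(-z.2, z.1).2 - w.2‖ = ‖z.1 - w.2‖ := rfl
      _ < K⁻¹ * ε * (1 + ‖w.2‖ + ‖w.1‖ ^ σ) ^ ρ := h1
      _ ≤ ε * theta d σ w ^ (ρ * σ) := hbound
end

section
/- Let σ > 0, 0 < ρ ≤ 1, C > 0 and suppose ∅ ≠ Ω ⊆ {(y, η) ∈ ℝ^d × ℝ^d : ⟨η⟩ ≤ C ⟨y⟩^σ}. Then there exist ε > 0 and C' > 0 such that for all (x, ξ) ∈ Ω_{ρ,ε} one has ⟨(x, ξ)⟩ ≤ C' ⟨x⟩^{max(σ, 1/σ)}. -/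
open scoped Real

variable {d : ℕ}

set_option maxHeartbeats 1000000 in
/-- if `Ω` lies below the anisotropic graph `⟨η⟩ ≤ C⟨y⟩^σ` then on a small
anisotropic neighborhood of `Ω` one has `⟨(x,ξ)⟩ ≤ C'⟨x⟩^{max(σ,1/σ)}`. -/
theorem stmt14 (d : ℕ) (σ ρ C : ℝ) (hσ : 0 < σ) (hρ0 : 0 < ρ) (hρ1 : ρ ≤ 1) (hC : 0 < C)
    (Ω : Set (EuclideanSpace ℝ (Fin d) × EuclideanSpace ℝ (Fin d))) (hΩ : Ω.Nonempty)
    (hsub : Ω ⊆ {w : EuclideanSpace ℝ (Fin d) × EuclideanSpace ℝ (Fin d) |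
      Real.sqrt (1 + ‖w.2‖ ^ 2) ≤ C * Real.sqrt (1 + ‖w.1‖ ^ 2) ^ σ}) :
    ∃ ε > 0, ∃ C' > 0, ∀ z ∈ aniso d σ ρ ε Ω,
      pairBracket z ≤ C' * Real.sqrt (1 + ‖z.1‖ ^ 2) ^ max σ (1 / σ) := by
  set m : ℝ := max σ (1 / σ) with hmdef
  have hm1 : 1 ≤ m := by
    rcases le_total 1 σ with h | h
    · exact le_trans h (le_max_left _ _)
    · exact le_trans (by rw [le_one_div one_pos hσ, div_one]; exact h) (le_max_right _ _)
  have hm0 : 0 ≤ m := le_trans zero_le_one hm1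
  set K : ℝ := 1 + C ^ (1 / σ) with hKdef
  have hCpow : (0:ℝ) ≤ C ^ (1 / σ) := Real.rpow_nonneg hC.le _
  have hK1 : 1 ≤ K := by rw [hKdef]; linarith
  have hKpos : 0 < K := lt_of_lt_of_le one_pos hK1
  set ε : ℝ := 1 / (2 * K) with hεdef
  have hε : 0 < ε := by positivity
  set B : ℝ := (C + ε * K ^ σ) * 2 ^ σ with hBdef
  have hB : 0 < B := by positivity
  refine ⟨ε, hε, (1 + B) * Real.sqrt 2 ^ m, by positivity, ?_⟩
  intro z hz
  obtain ⟨w, hwΩ, h1, h2⟩ := hz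
  have hy : (0:ℝ) ≤ ‖w.1‖ := norm_nonneg _
  have hη : (0:ℝ) ≤ ‖w.2‖ := norm_nonneg _
  have hx : (0:ℝ) ≤ ‖z.1‖ := norm_nonneg _
  have hθdef : theta d σ w = 1 + ‖w.1‖ + ‖w.2‖ ^ (1 / σ) := rfl
  have hθ1 : 1 ≤ theta d σ w := by
    rw [hθdef]; nlinarith [Real.rpow_nonneg hη (1 / σ)]
  have hθpos : 0 < theta d σ w := lt_of_lt_of_le one_pos hθ1
  have hsubw := hsub hwΩ
  have hηle : ‖w.2‖ ≤ C * (1 + ‖w.1‖) ^ σ := by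
    have e1 : ‖w.2‖ ≤ Real.sqrt (1 + ‖w.2‖ ^ 2) := by
      nth_rewrite 1 [show ‖w.2‖ = Real.sqrt (‖w.2‖ ^ 2) from (Real.sqrt_sq hη).symm]
      exact Real.sqrt_le_sqrt (by nlinarith)
    have e2 : Real.sqrt (1 + ‖w.1‖ ^ 2) ≤ 1 + ‖w.1‖ := by
      rw [show (1:ℝ) + ‖w.1‖ = Real.sqrt ((1 + ‖w.1‖) ^ 2) from
        (Real.sqrt_sq (by positivity)).symm]
      exact Real.sqrt_le_sqrt (by nlinarith)
    calc ‖w.2‖ ≤ Real.sqrt (1 + ‖w.2‖ ^ 2) := e1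
      _ ≤ C * Real.sqrt (1 + ‖w.1‖ ^ 2) ^ σ := hsubw
      _ ≤ C * (1 + ‖w.1‖) ^ σ := by gcongr
  have hA : ‖w.2‖ ^ (1 / σ) ≤ C ^ (1 / σ) * (1 + ‖w.1‖) := by
    have h := Real.rpow_le_rpow hη hηle (by positivity : (0:ℝ) ≤ 1 / σ)
    rwa [Real.mul_rpow hC.le (by positivity), ← Real.rpow_mul (by positivity),
      mul_one_div_cancel hσ.ne', Real.rpow_one] at h
  have hθK : theta d σ w ≤ K * (1 + ‖w.1‖) := by
    rw [hθdef, hKdef]; nlinarith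
  have hθρ : theta d σ w ^ ρ ≤ theta d σ w := by
    nth_rewrite 2 [← Real.rpow_one (theta d σ w)]
    exact Real.rpow_le_rpow_of_exponent_le hθ1 hρ1
  have hx1 : ‖z.1 - w.1‖ ≤ (1 + ‖w.1‖) / 2 := by
    have e : ε * (K * (1 + ‖w.1‖)) = (1 + ‖w.1‖) / 2 := by
      rw [hεdef]; field_simp
    calc ‖z.1 - w.1‖ ≤ ε * theta d σ w ^ ρ := h1.le
      _ ≤ ε * theta d σ w := mul_le_mul_of_nonneg_left hθρ hε.le
      _ ≤ ε * (K * (1 + ‖w.1‖)) := mul_le_mul_of_nonneg_left hθK hε.le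
      _ = (1 + ‖w.1‖) / 2 := e
  have hxy : 1 + ‖w.1‖ ≤ 2 * (1 + ‖z.1‖) := by
    have h' : ‖w.1‖ - ‖z.1‖ ≤ ‖z.1 - w.1‖ := by
      rw [norm_sub_rev]; exact norm_sub_norm_le _ _
    linarith
  have hθσ : theta d σ w ^ (ρ * σ) ≤ K ^ σ * (1 + ‖w.1‖) ^ σ := by
    have e1 : theta d σ w ^ (ρ * σ) ≤ theta d σ w ^ σ :=
      Real.rpow_le_rpow_of_exponent_le hθ1 (by nlinarith)
    have e2 : theta d σ w ^ σ ≤ (K * (1 + ‖w.1‖)) ^ σ :=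
      Real.rpow_le_rpow hθpos.le hθK hσ.le
    rw [Real.mul_rpow hKpos.le (by positivity)] at e2
    linarith
  have hKσ : (0:ℝ) ≤ K ^ σ := Real.rpow_nonneg hKpos.le _
  have haσ : (0:ℝ) ≤ (1 + ‖w.1‖) ^ σ := Real.rpow_nonneg (by positivity) _
  have hξ : ‖z.2‖ ≤ B * (1 + ‖z.1‖) ^ σ := by
    have e1 : ‖z.2‖ - ‖w.2‖ ≤ ‖z.2 - w.2‖ := norm_sub_norm_le _ _
    have t1 : ‖z.2 - w.2‖ ≤ ε * (K ^ σ * (1 + ‖w.1‖) ^ σ) :=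
      le_trans h2.le (mul_le_mul_of_nonneg_left hθσ hε.le)
    have e2 : ‖z.2‖ ≤ (C + ε * K ^ σ) * (1 + ‖w.1‖) ^ σ := by linarith
    have e3 : (1 + ‖w.1‖) ^ σ ≤ 2 ^ σ * (1 + ‖z.1‖) ^ σ := by
      rw [← Real.mul_rpow (by norm_num) (by positivity)]
      exact Real.rpow_le_rpow (by positivity) hxy hσ.le
    calc ‖z.2‖ ≤ (C + ε * K ^ σ) * (1 + ‖w.1‖) ^ σ := e2
      _ ≤ (C + ε * K ^ σ) * (2 ^ σ * (1 + ‖z.1‖) ^ σ) :=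
          mul_le_mul_of_nonneg_left e3 (by positivity)
      _ = B * (1 + ‖z.1‖) ^ σ := by rw [hBdef]; ring
  have hbr : pairBracket z ≤ 1 + ‖z.1‖ + ‖z.2‖ := by
    rw [pairBracket, show (1:ℝ) + ‖z.1‖ + ‖z.2‖ =
      Real.sqrt ((1 + ‖z.1‖ + ‖z.2‖) ^ 2) from (Real.sqrt_sq (by positivity)).symm]
    exact Real.sqrt_le_sqrt (by nlinarith [norm_nonneg z.2, mul_nonneg hx (norm_nonneg z.2)])
  have hxm : 1 + ‖z.1‖ ≤ Real.sqrt 2 * Real.sqrt (1 + ‖z.1‖ ^ 2) := by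
    rw [← Real.sqrt_mul (by norm_num),
      show (1:ℝ) + ‖z.1‖ = Real.sqrt ((1 + ‖z.1‖) ^ 2) from
        (Real.sqrt_sq (by positivity)).symm]
    exact Real.sqrt_le_sqrt (by nlinarith [sq_nonneg (1 - ‖z.1‖)])
  have hpow1 : 1 + ‖z.1‖ ≤ (1 + ‖z.1‖) ^ m := by
    nth_rewrite 1 [← Real.rpow_one (1 + ‖z.1‖)]
    exact Real.rpow_le_rpow_of_exponent_le (by linarith) hm1
  have hpowσ : (1 + ‖z.1‖) ^ σ ≤ (1 + ‖z.1‖) ^ m :=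
    Real.rpow_le_rpow_of_exponent_le (by linarith) (le_max_left _ _)
  have hfin : (1 + ‖z.1‖) ^ m ≤ Real.sqrt 2 ^ m * Real.sqrt (1 + ‖z.1‖ ^ 2) ^ m := by
    rw [← Real.mul_rpow (Real.sqrt_nonneg _) (Real.sqrt_nonneg _)]
    exact Real.rpow_le_rpow (by positivity) hxm hm0
  have hpm : (0:ℝ) ≤ (1 + ‖z.1‖) ^ m := Real.rpow_nonneg (by positivity) _
  calc pairBracket z ≤ 1 + ‖z.1‖ + ‖z.2‖ := hbr
    _ ≤ (1 + ‖z.1‖) ^ m + B * (1 + ‖z.1‖) ^ m := by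
          have := mul_le_mul_of_nonneg_left hpowσ hB.le
          linarith
    _ = (1 + B) * (1 + ‖z.1‖) ^ m := by ring
    _ ≤ (1 + B) * (Real.sqrt 2 ^ m * Real.sqrt (1 + ‖z.1‖ ^ 2) ^ m) :=
          mul_le_mul_of_nonneg_left hfin (by positivity)
    _ = (1 + B) * Real.sqrt 2 ^ m * Real.sqrt (1 + ‖z.1‖ ^ 2) ^ m := by ring
end
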